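/- arXiv:1304.0224 — 4 statements merged into one kernel-verified Lean document; each statement's English description precedes it below -/
import Mathlib

section
/- Let n ≥ 4 and let V be a left K-vector space over a division ring K with finrank V = n + 1. For all lines a₁, a₂, a₃ of V the following are equivalent: (i) for every line g there exists a line h such that g ∼ h and, for every i ∈ {1,2,3} (indices taken mod 3), aᵢ ∼ aᵢ₊₁ and aᵢ ∼ h; (ii) a₁, a₂, a₃ are pairwise distinct and concurrent. -/
/-- `a` is a projective line: a submodule of finrank 2. -/
def PLine {K V : Type*} [DivisionRing K] [AddCommGroup V] [Module K V]
    (a : Submodule K V) : Prop := Module.finrank K a = 2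

/-- `p` is a projective point: a submodule of finrank 1. -/
def PPoint {K V : Type*} [DivisionRing K] [AddCommGroup V] [Module K V]
    (p : Submodule K V) : Prop := Module.finrank K p = 1

/-- Two lines intersect: they are different and have nontrivial intersection. -/
def PMeets {K V : Type*} [DivisionRing K] [AddCommGroup V] [Module K V]
    (a b : Submodule K V) : Prop := a ≠ b ∧ a ⊓ b ≠ ⊥

open Module Submodule

set_option linter.unusedSectionVars false
section Helpers

variable {K V : Type*} [DivisionRing K] [AddCommGroup V] [Module K V] [FiniteDimensional K V]

lemma pl_one_le {s : Submodule K V} (hs : s ≠ ⊥) : 1 ≤ finrank K s := by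
  rcases Nat.eq_zero_or_pos (finrank K s) with h | h
  · exact absurd (Submodule.finrank_eq_zero.mp h) hs
  · exact h

lemma pl_point_ne_bot {p : Submodule K V} (hp : PPoint p) : p ≠ ⊥ := by
  intro h
  rw [h] at hp
  simp [PPoint, finrank_bot] at hp

lemma pl_ne_bot_of_le {p s : Submodule K V} (hp : p ≠ ⊥) (hle : p ≤ s) : s ≠ ⊥ :=
  fun hs => hp (le_bot_iff.mp (hs ▸ hle))

lemma pl_point_span {v : V} (hv : v ≠ 0) : PPoint (K ∙ v) := finrank_span_singleton hv

lemma pl_point_eq_span {p : Submodule K V} (hp : PPoint p) {v : V} (hv : v ≠ 0)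
    (hmem : v ∈ p) : p = K ∙ v := by
  refine (Submodule.eq_of_le_of_finrank_le ?_ ?_).symm
  · rwa [Submodule.span_le, Set.singleton_subset_iff]
  · rw [hp, (pl_point_span hv : PPoint (K ∙ v))]

lemma pl_point_eq_of_le {p q : Submodule K V} (hp : PPoint p) (hq : PPoint q)
    (hle : p ≤ q) : p = q :=
  Submodule.eq_of_le_of_finrank_le hle (by rw [hp, hq])

lemma pl_point_inf_eq_bot {p q : Submodule K V} (hp : PPoint p) (hq : PPoint q)
    (hne : p ≠ q) : p ⊓ q = ⊥ := by
  by_contra hb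
  have h1 : 1 ≤ finrank K (p ⊓ q : Submodule K V) := pl_one_le hb
  have : p ⊓ q = p := Submodule.eq_of_le_of_finrank_le inf_le_left (by rw [hp]; omega)
  exact hne (pl_point_eq_of_le hp hq (inf_eq_left.mp this))

lemma pl_sup_points {p q : Submodule K V} (hp : PPoint p) (hq : PPoint q)
    (hne : p ≠ q) : finrank K (p ⊔ q : Submodule K V) = 2 := by
  have := Submodule.finrank_sup_add_finrank_inf_eq p q
  rw [pl_point_inf_eq_bot hp hq hne, finrank_bot, hp, hq] at this
  omega

lemma pl_line_eq_of_le {a b : Submodule K V} (ha : PLine a) (hb : PLine b)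
    (hle : a ≤ b) : a = b :=
  Submodule.eq_of_le_of_finrank_le hle (by rw [ha, hb])

lemma pl_inf_point {a b : Submodule K V} (ha : PLine a) (hb : PLine b)
    (hne : a ≠ b) (hib : a ⊓ b ≠ ⊥) : PPoint (a ⊓ b) := by
  have h1 : 1 ≤ finrank K (a ⊓ b : Submodule K V) := pl_one_le hib
  have h2 : finrank K (a ⊓ b : Submodule K V) ≤ 2 := by
    have := Submodule.finrank_mono (inf_le_left : a ⊓ b ≤ a)
    rwa [ha] at this
  have h3 : finrank K (a ⊓ b : Submodule K V) ≠ 2 := by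
    intro h
    have : a ⊓ b = a := Submodule.eq_of_le_of_finrank_le inf_le_left (by rw [ha, h])
    exact hne (pl_line_eq_of_le ha hb (inf_eq_left.mp this))
  unfold PPoint; omega

lemma pl_finrank_sup_le (s t : Submodule K V) :
    finrank K (s ⊔ t : Submodule K V) ≤ finrank K s + finrank K t := by
  have := Submodule.finrank_sup_add_finrank_inf_eq s t
  omega

lemma pl_finrank_sup_le' {s t : Submodule K V} (h : s ⊓ t ≠ ⊥) :
    finrank K (s ⊔ t : Submodule K V) + 1 ≤ finrank K s + finrank K t := by
  have h1 := Submodule.finrank_sup_add_finrank_inf_eq s t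
  have h2 := pl_one_le h
  omega

lemma pl_ne_top {s : Submodule K V} (h : finrank K s < finrank K V) : s ≠ ⊤ := by
  intro hs
  rw [hs, finrank_top] at h
  omega

lemma pl_exists_not_mem {s : Submodule K V} (h : s ≠ ⊤) : ∃ v, v ∉ s := by
  obtain ⟨x, -, hx⟩ := SetLike.exists_of_lt (show s < ⊤ from lt_top_iff_ne_top.mpr h)
  exact ⟨x, hx⟩

lemma pl_point_notin {p s : Submodule K V} (hp : PPoint p) (hps : ¬ p ≤ s)
    {v : V} (hv : v ∈ p) (hv0 : v ≠ 0) : v ∉ s := by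
  intro hvs
  exact hps ((pl_point_eq_span hp hv0 hv) ▸ (Submodule.span_le.mpr (Set.singleton_subset_iff.mpr hvs)))

lemma pl_line_through {p a : Submodule K V} (hp : PPoint p) (ha : PLine a)
    (hpa : p ≤ a) : ∃ x, x ∈ a ∧ x ∉ p ∧ a = p ⊔ (K ∙ x) := by
  have hne : ¬ a ≤ p := by
    intro hle
    have := Submodule.finrank_mono hle
    rw [ha, hp] at this; omega
  obtain ⟨x, hxa, hxp⟩ := SetLike.not_le_iff_exists.mp hne
  have hx0 : x ≠ 0 := fun h => hxp (h ▸ p.zero_mem)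
  have hsup : finrank K (p ⊔ (K ∙ x) : Submodule K V) = 2 := by
    refine pl_sup_points hp (pl_point_span hx0) ?_
    intro h
    exact hxp (h ▸ Submodule.mem_span_singleton_self x)
  refine ⟨x, hxa, hxp, (Submodule.eq_of_le_of_finrank_le ?_ (by rw [ha, hsup])).symm⟩
  exact sup_le hpa (Submodule.span_le.mpr (Set.singleton_subset_iff.mpr hxa))

lemma pl_avoid_two {g A B : Submodule K V} (hA : ∃ x ∈ g, x ∉ A) (hB : ∃ x ∈ g, x ∉ B) :
    ∃ u ∈ g, u ∉ A ∧ u ∉ B := by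
  obtain ⟨u, hug, huA⟩ := hA
  obtain ⟨v, hvg, hvB⟩ := hB
  by_cases huB : u ∈ B
  · by_cases hvA : v ∈ A
    · refine ⟨u + v, g.add_mem hug hvg, fun h => huA ?_, fun h => hvB ?_⟩
      · simpa using A.sub_mem h hvA
      · simpa using B.sub_mem h huB
    · exact ⟨v, hvg, hvA, hvB⟩
  · exact ⟨u, hug, huA, huB⟩

lemma pl_exists_disjoint_line {W : Submodule K V} (hW : finrank K W + 2 ≤ finrank K V) :
    ∃ g : Submodule K V, PLine g ∧ g ⊓ W = ⊥ := by
  obtain ⟨v₁, hv₁⟩ := pl_exists_not_mem (pl_ne_top (s := W) (by omega))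
  have hv₁0 : v₁ ≠ 0 := fun h => hv₁ (h ▸ W.zero_mem)
  have hW' : finrank K (W ⊔ (K ∙ v₁) : Submodule K V) < finrank K V := by
    have := pl_finrank_sup_le W (K ∙ v₁)
    rw [finrank_span_singleton hv₁0] at this
    omega
  obtain ⟨v₂, hv₂⟩ := pl_exists_not_mem (pl_ne_top hW')
  have hv₂0 : v₂ ≠ 0 := fun h => hv₂ (h ▸ (W ⊔ (K ∙ v₁)).zero_mem)
  have hspanne : (K ∙ v₁) ≠ (K ∙ v₂) := by
    intro h
    exact hv₂ (Submodule.mem_sup_right (h ▸ Submodule.mem_span_singleton_self v₂))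
  refine ⟨(K ∙ v₁) ⊔ (K ∙ v₂), pl_sup_points (pl_point_span hv₁0) (pl_point_span hv₂0) hspanne, ?_⟩
  rw [eq_bot_iff]
  rintro x ⟨hxg, hxW⟩
  obtain ⟨y, hy, z, hz, hyz⟩ := Submodule.mem_sup.mp hxg
  obtain ⟨c, rfl⟩ := Submodule.mem_span_singleton.mp hy
  obtain ⟨d, rfl⟩ := Submodule.mem_span_singleton.mp hz
  by_cases hd : d = 0
  · subst hd
    simp only [zero_smul, add_zero] at hyz
    by_cases hc : c = 0
    · subst hc; simp [← hyz]
    · exfalso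
      apply hv₁
      have : c • v₁ ∈ W := hyz ▸ hxW
      simpa [hc] using W.smul_mem c⁻¹ this
  · exfalso
    apply hv₂
    have h1 : d • v₂ ∈ W ⊔ (K ∙ v₁) := by
      have hx : x ∈ W ⊔ (K ∙ v₁) := Submodule.mem_sup_left hxW
      have hc : c • v₁ ∈ W ⊔ (K ∙ v₁) :=
        Submodule.mem_sup_right ((K ∙ v₁).smul_mem c (Submodule.mem_span_singleton_self v₁))
      have := (W ⊔ (K ∙ v₁)).sub_mem hx hc
      rwa [← hyz, add_sub_cancel_left] at this
    simpa [hd] using (W ⊔ (K ∙ v₁)).smul_mem d⁻¹ h1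

end Helpers

theorem statement0 {K V : Type*} [DivisionRing K] [AddCommGroup V] [Module K V]
    {n : ℕ} (hn : 4 ≤ n) (hdim : Module.finrank K V = n + 1)
    (a : Fin 3 → Submodule K V) (ha : ∀ i, PLine (a i)) :
    (∀ g : Submodule K V, PLine g → ∃ h : Submodule K V, PLine h ∧ PMeets g h ∧
        ∀ i : Fin 3, PMeets (a i) (a (i + 1)) ∧ PMeets (a i) h) ↔
    ((∀ i j : Fin 3, i ≠ j → a i ≠ a j) ∧
      ∃ p : Submodule K V, PPoint p ∧ ∀ i : Fin 3, p ≤ a i) := by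
  haveI hfd : FiniteDimensional K V := FiniteDimensional.of_finrank_pos (by omega)
  have hii : ∀ i : Fin 3, i ≠ i + 1 := by decide
  constructor
  · intro H
    obtain ⟨h₀, hl₀, hm₀, hall⟩ := H (a 0) (ha 0)
    have m01 : PMeets (a 0) (a 1) := (hall 0).1
    have m12 : PMeets (a 1) (a 2) := (hall 1).1
    have m20 : PMeets (a 2) (a 0) := (hall 2).1
    have hd : ∀ i j : Fin 3, i ≠ j → a i ≠ a j := by
      intro i j hij
      fin_cases i <;> fin_cases j <;>
        first
          | exact absurd rfl hij
          | exact m01.1 | exact m01.1.symm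
          | exact m12.1 | exact m12.1.symm
          | exact m20.1 | exact m20.1.symm
    refine ⟨hd, ?_⟩
    by_contra hcon
    have hq01 : PPoint (a 0 ⊓ a 1) := pl_inf_point (ha 0) (ha 1) m01.1 m01.2
    have hq12 : PPoint (a 1 ⊓ a 2) := pl_inf_point (ha 1) (ha 2) m12.1 m12.2
    have hq20 : PPoint (a 2 ⊓ a 0) := pl_inf_point (ha 2) (ha 0) m20.1 m20.2
    have hnc : ∀ p : Submodule K V, PPoint p → p ≤ a 0 → p ≤ a 1 → p ≤ a 2 → False := by
      intro p hp h0 h1 h2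
      exact hcon ⟨p, hp, fun i => by fin_cases i <;> assumption⟩
    have hne1220 : a 1 ⊓ a 2 ≠ a 2 ⊓ a 0 := by
      intro h
      exact hnc (a 1 ⊓ a 2) hq12 (by rw [h]; exact inf_le_right) inf_le_left inf_le_right
    set P := a 0 ⊔ a 1 with hP
    have hrP : Module.finrank K P = 3 := by
      have h1 := Submodule.finrank_sup_add_finrank_inf_eq (a 0) (a 1)
      rw [ha 0, ha 1, hq01] at h1
      rw [← hP] at h1
      omega
    have ha2P : a 2 ≤ P := by
      have hsup : (a 1 ⊓ a 2) ⊔ (a 2 ⊓ a 0) = a 2 := by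
        refine Submodule.eq_of_le_of_finrank_le (sup_le inf_le_right inf_le_left) ?_
        rw [ha 2, pl_sup_points hq12 hq20 hne1220]
      rw [← hsup]
      exact sup_le (le_trans inf_le_left le_sup_right) (le_trans inf_le_right le_sup_left)
    have haP : ∀ i, a i ≤ P := by
      intro i; fin_cases i
      · exact le_sup_left
      · exact le_sup_right
      · exact ha2P
    obtain ⟨g, hgline, hgP⟩ := pl_exists_disjoint_line (W := P) (by rw [hrP, hdim]; omega)
    obtain ⟨h, hlh, ⟨hghne, hghinf⟩, hih⟩ := H g hgline
    have hhP : ¬ h ≤ P := by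
      intro hle
      apply hghinf
      rw [eq_bot_iff]
      exact le_trans (le_inf inf_le_left (le_trans inf_le_right hle)) hgP.le
    have hrle : Module.finrank K (h ⊓ P : Submodule K V) ≤ 1 := by
      have h2 : Module.finrank K (h ⊓ P : Submodule K V) ≤ 2 := by
        have := Submodule.finrank_mono (inf_le_left : h ⊓ P ≤ h); rwa [hlh] at this
      rcases Nat.lt_or_ge (Module.finrank K (h ⊓ P : Submodule K V)) 2 with h' | h'
      · omega
      · exfalso
        have : h ⊓ P = h := Submodule.eq_of_le_of_finrank_le inf_le_left (by rw [hlh]; omega)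
        exact hhP (inf_eq_left.mp this)
    have hkey : ∀ i : Fin 3, h ⊓ P ≤ a i := by
      intro i
      have hri : a i ⊓ h ≠ ⊥ := (hih i).2.2
      have hle : a i ⊓ h ≤ h ⊓ P := le_inf inf_le_right (le_trans inf_le_left (haP i))
      have heq : a i ⊓ h = h ⊓ P :=
        Submodule.eq_of_le_of_finrank_le hle (le_trans hrle (pl_one_le hri))
      rw [← heq]; exact inf_le_left
    have hbot : h ⊓ P ≠ ⊥ :=
      pl_ne_bot_of_le ((hih 0).2.2) (le_inf inf_le_right (le_trans inf_le_left (haP 0)))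
    have hpoint : PPoint (h ⊓ P) := by
      have h1 := pl_one_le hbot
      unfold PPoint
      omega
    exact hnc _ hpoint (hkey 0) (hkey 1) (hkey 2)
  · rintro ⟨hdist, p, hp, hple⟩
    have hpb : p ≠ ⊥ := pl_point_ne_bot hp
    have hmeets : ∀ i : Fin 3, PMeets (a i) (a (i+1)) := by
      intro i
      exact ⟨hdist i (i+1) (hii i), pl_ne_bot_of_le hpb (le_inf (hple i) (hple (i+1)))⟩
    intro g hg
    by_cases hpg : p ≤ g
    · -- case 1 : p ≤ g
      obtain ⟨x0, hx0g, hx0p, hgeq⟩ := pl_line_through hp hg hpg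
      obtain ⟨x1, hx1, hx1p, ha0eq⟩ := pl_line_through hp (ha 0) (hple 0)
      obtain ⟨x2, hx2, hx2p, ha1eq⟩ := pl_line_through hp (ha 1) (hple 1)
      obtain ⟨x3, hx3, hx3p, ha2eq⟩ := pl_line_through hp (ha 2) (hple 2)
      have hb : ∀ s t u : Submodule K V, p ≤ s → p ≤ t → p ≤ u → Module.finrank K s = 2 →
          Module.finrank K t = 2 → Module.finrank K u = 2 →
          Module.finrank K (s ⊔ t ⊔ u : Submodule K V) ≤ 4 := by
        intro s t u hs ht hu h2s h2t h2u
        have h1 : Module.finrank K (s ⊔ t : Submodule K V) ≤ 3 := by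
          have := pl_finrank_sup_le' (pl_ne_bot_of_le hpb (le_inf hs ht))
          omega
        have h2 : (s ⊔ t) ⊓ u ≠ ⊥ :=
          pl_ne_bot_of_le hpb (le_inf (le_trans hs le_sup_left) hu)
        have := pl_finrank_sup_le' h2
        omega
      have claim : ∃ v, v ∉ g ∧ v ∉ a 0 ∧ v ∉ a 1 ∧ v ∉ a 2 := by
        by_cases hS : g ⊔ a 0 ⊔ a 1 ⊔ a 2 = ⊤
        · have habs : ∀ T : Submodule K V, Module.finrank K T ≤ 4 →
              (g ⊔ a 0 ⊔ a 1 ⊔ a 2) ≤ T → False := by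
            intro T hT hle
            have h1 := Submodule.finrank_mono hle
            rw [hS, finrank_top, hdim] at h1
            omega
          have hT1 : Module.finrank K (g ⊔ a 0 ⊔ a 1 : Submodule K V) ≤ 4 :=
            hb _ _ _ hpg (hple 0) (hple 1) hg (ha 0) (ha 1)
          have hT2 : Module.finrank K (g ⊔ a 0 ⊔ a 2 : Submodule K V) ≤ 4 :=
            hb _ _ _ hpg (hple 0) (hple 2) hg (ha 0) (ha 2)
          have hmem1 : x0 + x1 + x2 + x3 ∈ (g ⊔ a 0 ⊔ a 1 : Submodule K V) → False := by
            intro hvT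
            apply habs _ hT1
            have hgT : g ≤ g ⊔ a 0 ⊔ a 1 := le_trans le_sup_left le_sup_left
            have ha0T : a 0 ≤ g ⊔ a 0 ⊔ a 1 := le_trans le_sup_right le_sup_left
            have ha1T : a 1 ≤ g ⊔ a 0 ⊔ a 1 := le_sup_right
            have hx3T : x3 ∈ (g ⊔ a 0 ⊔ a 1 : Submodule K V) := by
              have hm := Submodule.sub_mem _ (Submodule.sub_mem _
                (Submodule.sub_mem _ hvT (hgT hx0g)) (ha0T hx1)) (ha1T hx2)
              have he : x0 + x1 + x2 + x3 - x0 - x1 - x2 = x3 := by abel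
              rwa [he] at hm
            have ha2T : a 2 ≤ g ⊔ a 0 ⊔ a 1 := by
              rw [ha2eq]
              exact sup_le (le_trans hpg hgT)
                (Submodule.span_le.mpr (Set.singleton_subset_iff.mpr hx3T))
            exact sup_le le_rfl ha2T
          have hmem2 : x0 + x1 + x2 + x3 ∈ (g ⊔ a 0 ⊔ a 2 : Submodule K V) → False := by
            intro hvT
            apply habs _ hT2
            have hgT : g ≤ g ⊔ a 0 ⊔ a 2 := le_trans le_sup_left le_sup_left
            have ha0T : a 0 ≤ g ⊔ a 0 ⊔ a 2 := le_trans le_sup_right le_sup_left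
            have ha2T : a 2 ≤ g ⊔ a 0 ⊔ a 2 := le_sup_right
            have hx2T : x2 ∈ (g ⊔ a 0 ⊔ a 2 : Submodule K V) := by
              have hm := Submodule.sub_mem _ (Submodule.sub_mem _
                (Submodule.sub_mem _ hvT (hgT hx0g)) (ha0T hx1)) (ha2T hx3)
              have he : x0 + x1 + x2 + x3 - x0 - x1 - x3 = x2 := by abel
              rwa [he] at hm
            have ha1T : a 1 ≤ g ⊔ a 0 ⊔ a 2 := by
              rw [ha1eq]
              exact sup_le (le_trans hpg hgT)
                (Submodule.span_le.mpr (Set.singleton_subset_iff.mpr hx2T))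
            exact sup_le (sup_le (sup_le hgT ha0T) ha1T) ha2T
          refine ⟨x0 + x1 + x2 + x3,
            fun hm => hmem1 (Submodule.mem_sup_left (Submodule.mem_sup_left hm)),
            fun hm => hmem1 (Submodule.mem_sup_left (Submodule.mem_sup_right hm)),
            fun hm => hmem1 (Submodule.mem_sup_right hm),
            fun hm => hmem2 (Submodule.mem_sup_right hm)⟩
        · obtain ⟨v, hv⟩ := pl_exists_not_mem hS
          have hgS : g ≤ g ⊔ a 0 ⊔ a 1 ⊔ a 2 :=
            le_trans le_sup_left (le_trans le_sup_left le_sup_left)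
          have ha0S : a 0 ≤ g ⊔ a 0 ⊔ a 1 ⊔ a 2 :=
            le_trans le_sup_right (le_trans le_sup_left le_sup_left)
          have ha1S : a 1 ≤ g ⊔ a 0 ⊔ a 1 ⊔ a 2 := le_trans le_sup_right le_sup_left
          have ha2S : a 2 ≤ g ⊔ a 0 ⊔ a 1 ⊔ a 2 := le_sup_right
          exact ⟨v, fun hm => hv (hgS hm), fun hm => hv (ha0S hm),
            fun hm => hv (ha1S hm), fun hm => hv (ha2S hm)⟩
      obtain ⟨v, hvg, hv0', hv1', hv2'⟩ := claim
      have hv0 : v ≠ 0 := fun h => hvg (h ▸ g.zero_mem)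
      have hvp : v ∉ p := fun h => hv0' (hple 0 h)
      have hpspan : p ≠ (K ∙ v) := fun h => hvp (h ▸ Submodule.mem_span_singleton_self v)
      refine ⟨p ⊔ (K ∙ v), pl_sup_points hp (pl_point_span hv0) hpspan, ⟨?_, ?_⟩, ?_⟩
      · intro heq
        rw [heq] at hvg
        exact hvg (Submodule.mem_sup_right (Submodule.mem_span_singleton_self v))
      · exact pl_ne_bot_of_le hpb (le_inf hpg le_sup_left)
      · intro i
        refine ⟨hmeets i, ?_, pl_ne_bot_of_le hpb (le_inf (hple i) le_sup_left)⟩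
        intro heq
        have hvai : v ∉ a i := by fin_cases i <;> assumption
        rw [heq] at hvai
        exact hvai (Submodule.mem_sup_right (Submodule.mem_span_singleton_self v))
    · -- case 2 : ¬ p ≤ g
      obtain ⟨w, hwp, hw0⟩ := p.ne_bot_iff.mp hpb
      have hwg : w ∉ g := pl_point_notin hp hpg hwp hw0
      have hgai : ∀ i, g ≠ a i := by
        intro i heq
        exact hpg (by rw [heq]; exact hple i)
      by_cases hex : ∃ u ∈ g, u ∉ a 0 ∧ u ∉ a 1 ∧ u ∉ a 2
      · obtain ⟨u, hug, hu0, hu1, hu2⟩ := hex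
        have hu0' : u ≠ 0 := fun h => hu0 (h ▸ (a 0).zero_mem)
        have hup : u ∉ p := fun h => hu0 (hple 0 h)
        have hpsu : p ≠ K ∙ u := fun h => hup (h ▸ Submodule.mem_span_singleton_self u)
        refine ⟨p ⊔ (K ∙ u), pl_sup_points hp (pl_point_span hu0') hpsu, ⟨?_, ?_⟩, ?_⟩
        · intro heq
          rw [heq] at hwg
          exact hwg (Submodule.mem_sup_left hwp)
        · intro hbot
          have hm : u ∈ g ⊓ (p ⊔ (K ∙ u)) :=
            ⟨hug, Submodule.mem_sup_right (Submodule.mem_span_singleton_self u)⟩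
          rw [hbot] at hm
          exact hu0' ((Submodule.mem_bot K).mp hm)
        · intro i
          refine ⟨hmeets i, ?_, pl_ne_bot_of_le hpb (le_inf (hple i) le_sup_left)⟩
          intro heq
          have hu' : u ∉ a i := by fin_cases i <;> assumption
          rw [heq] at hu'
          exact hu' (Submodule.mem_sup_right (Submodule.mem_span_singleton_self u))
      · -- covering case
        have hcov : ∀ u ∈ g, u ∈ a 0 ∨ u ∈ a 1 ∨ u ∈ a 2 := by
          intro u hu
          by_contra hc
          push_neg at hc
          exact hex ⟨u, hu, hc.1, hc.2.1, hc.2.2⟩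
        have hnle : ∀ i, ¬ g ≤ a i := fun i hle => hgai i (pl_line_eq_of_le hg (ha i) hle)
        have hexi : ∀ i, ∃ x ∈ g, x ∉ a i := fun i => SetLike.not_le_iff_exists.mp (hnle i)
        have mk : ∀ i j k : Fin 3, (∀ u ∈ g, u ∉ a j → u ∉ a k → u ∈ a i) → g ⊓ a i ≠ ⊥ := by
          intro i j k hjk
          obtain ⟨u, hug, huj, huk⟩ := pl_avoid_two (hexi j) (hexi k)
          have hu0 : u ≠ 0 := fun h => huj (h ▸ (a j).zero_mem)
          exact (g ⊓ a i).ne_bot_iff.mpr ⟨u, ⟨hug, hjk u hug huj huk⟩, hu0⟩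
        have hq0 : g ⊓ a 0 ≠ ⊥ :=
          mk 0 1 2 (fun u hug h1 h2 => (hcov u hug).resolve_right (fun h => h.elim h1 h2))
        have hq1 : g ⊓ a 1 ≠ ⊥ :=
          mk 1 0 2 (fun u hug h0 h2 => ((hcov u hug).resolve_left h0).resolve_right h2)
        have hq2 : g ⊓ a 2 ≠ ⊥ :=
          mk 2 0 1 (fun u hug h0 h1 => ((hcov u hug).resolve_left h0).resolve_left h1)
        have hqp0 : PPoint (g ⊓ a 0) := pl_inf_point hg (ha 0) (hgai 0) hq0
        have hqp1 : PPoint (g ⊓ a 1) := pl_inf_point hg (ha 1) (hgai 1) hq1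
        have hqp2 : PPoint (g ⊓ a 2) := pl_inf_point hg (ha 2) (hgai 2) hq2
        have hinfp : ∀ i j : Fin 3, i ≠ j → a i ⊓ a j = p := by
          intro i j hij
          have hb2 : a i ⊓ a j ≠ ⊥ := pl_ne_bot_of_le hpb (le_inf (hple i) (hple j))
          exact (pl_point_eq_of_le hp (pl_inf_point (ha i) (ha j) (hdist i j hij) hb2)
            (le_inf (hple i) (hple j))).symm
        have mkne : ∀ i j : Fin 3, i ≠ j → PPoint (g ⊓ a i) → g ⊓ a i ≠ g ⊓ a j := by
          intro i j hij hpt heq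
          have h1 : g ⊓ a i ≤ p := by
            rw [← hinfp i j hij]
            exact le_inf inf_le_right (by rw [heq]; exact inf_le_right)
          have h2 : g ⊓ a i = p := pl_point_eq_of_le hpt hp h1
          exact hpg (by rw [← h2]; exact inf_le_left)
        obtain ⟨x1, hx1q, hx10⟩ := (g ⊓ a 0).ne_bot_iff.mp hq0
        obtain ⟨x2, hx2q, hx20⟩ := (g ⊓ a 1).ne_bot_iff.mp hq1
        obtain ⟨x3, hx3q, hx30⟩ := (g ⊓ a 2).ne_bot_iff.mp hq2
        have hspan0 : g ⊓ a 0 = K ∙ x1 := pl_point_eq_span hqp0 hx10 hx1q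
        have hspan1 : g ⊓ a 1 = K ∙ x2 := pl_point_eq_span hqp1 hx20 hx2q
        have hspan2 : g ⊓ a 2 = K ∙ x3 := pl_point_eq_span hqp2 hx30 hx3q
        have hgspan : g = (g ⊓ a 0) ⊔ (g ⊓ a 1) := by
          refine (Submodule.eq_of_le_of_finrank_le (sup_le inf_le_left inf_le_left) ?_).symm
          rw [hg, pl_sup_points hqp0 hqp1 (mkne 0 1 (by decide) hqp0)]
        have hx3g : x3 ∈ (g ⊓ a 0) ⊔ (g ⊓ a 1) := by rw [← hgspan]; exact hx3q.1
        obtain ⟨y, hy, z, hz, hyz⟩ := Submodule.mem_sup.mp hx3g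
        rw [hspan0] at hy
        rw [hspan1] at hz
        obtain ⟨c1, rfl⟩ := Submodule.mem_span_singleton.mp hy
        obtain ⟨c2, rfl⟩ := Submodule.mem_span_singleton.mp hz
        have hc2 : c2 ≠ 0 := by
          intro h0
          subst h0
          rw [zero_smul, add_zero] at hyz
          have hm : x3 ∈ g ⊓ a 0 := hyz ▸ (g ⊓ a 0).smul_mem c1 hx1q
          have hle : g ⊓ a 2 ≤ g ⊓ a 0 := by
            rw [hspan2]
            exact Submodule.span_le.mpr (Set.singleton_subset_iff.mpr hm)
          exact mkne 2 0 (by decide) hqp2 (pl_point_eq_of_le hqp2 hqp0 hle)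
        have hx1a1 : x1 ∉ a 1 := by
          intro hm
          have hle : g ⊓ a 0 ≤ g ⊓ a 1 := by
            rw [hspan0]
            exact Submodule.span_le.mpr (Set.singleton_subset_iff.mpr ⟨hx1q.1, hm⟩)
          exact mkne 0 1 (by decide) hqp0 (pl_point_eq_of_le hqp0 hqp1 hle)
        have hx1a2 : x1 ∉ a 2 := by
          intro hm
          have hle : g ⊓ a 0 ≤ g ⊓ a 2 := by
            rw [hspan0]
            exact Submodule.span_le.mpr (Set.singleton_subset_iff.mpr ⟨hx1q.1, hm⟩)
          exact mkne 0 2 (by decide) hqp0 (pl_point_eq_of_le hqp0 hqp2 hle)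
        have hx2a0 : x2 ∉ a 0 := by
          intro hm
          have hle : g ⊓ a 1 ≤ g ⊓ a 0 := by
            rw [hspan1]
            exact Submodule.span_le.mpr (Set.singleton_subset_iff.mpr ⟨hx2q.1, hm⟩)
          exact mkne 1 0 (by decide) hqp1 (pl_point_eq_of_le hqp1 hqp0 hle)
        have hx3a0 : x3 ∉ a 0 := by
          intro hm
          have hle : g ⊓ a 2 ≤ g ⊓ a 0 := by
            rw [hspan2]
            exact Submodule.span_le.mpr (Set.singleton_subset_iff.mpr ⟨hx3q.1, hm⟩)
          exact mkne 2 0 (by decide) hqp2 (pl_point_eq_of_le hqp2 hqp0 hle)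
        have hwx2 : w + x2 ∉ g := by
          intro hm
          have : w ∈ g := by simpa using g.sub_mem hm hx2q.1
          exact hwg this
        have hwx20 : w + x2 ≠ 0 := by
          intro h0
          have : w = -x2 := eq_neg_of_add_eq_zero_left h0
          exact hwg (this ▸ g.neg_mem hx2q.1)
        have hptw : PPoint (K ∙ (w + x2)) := pl_point_span hwx20
        have hqnew : g ⊓ a 0 ≠ K ∙ (w + x2) := by
          intro heq
          exact hwx2 (show w + x2 ∈ g ⊓ a 0 from by
            rw [heq]; exact Submodule.mem_span_singleton_self _).1
        refine ⟨(g ⊓ a 0) ⊔ (K ∙ (w + x2)), pl_sup_points hqp0 hptw hqnew, ⟨?_, ?_⟩, ?_⟩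
        · intro heq
          rw [heq] at hwx2
          exact hwx2 (Submodule.mem_sup_right (Submodule.mem_span_singleton_self _))
        · exact (g ⊓ _).ne_bot_iff.mpr ⟨x1, ⟨hx1q.1, Submodule.mem_sup_left hx1q⟩, hx10⟩
        · have hP0 : PMeets (a 0) ((g ⊓ a 0) ⊔ (K ∙ (w + x2))) := by
            constructor
            · intro heq
              have hm : w + x2 ∈ a 0 := by
                rw [heq]
                exact Submodule.mem_sup_right (Submodule.mem_span_singleton_self _)
              have : x2 ∈ a 0 := by simpa using (a 0).sub_mem hm (hple 0 hwp)
              exact hx2a0 this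
            · exact pl_ne_bot_of_le hq0 (le_inf inf_le_right le_sup_left)
          have hP1 : PMeets (a 1) ((g ⊓ a 0) ⊔ (K ∙ (w + x2))) := by
            constructor
            · intro heq
              have : x1 ∈ a 1 := by rw [heq]; exact Submodule.mem_sup_left hx1q
              exact hx1a1 this
            · refine (a 1 ⊓ _).ne_bot_iff.mpr ⟨w + x2, ⟨(a 1).add_mem (hple 1 hwp) hx2q.2,
                Submodule.mem_sup_right (Submodule.mem_span_singleton_self _)⟩, hwx20⟩
          have hP2 : PMeets (a 2) ((g ⊓ a 0) ⊔ (K ∙ (w + x2))) := by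
            constructor
            · intro heq
              have : x1 ∈ a 2 := by rw [heq]; exact Submodule.mem_sup_left hx1q
              exact hx1a2 this
            · have hz0 : c2 • w + x3 ≠ 0 := by
                intro h0
                have hx3mem : x3 ∈ p := by
                  have : x3 = -(c2 • w) := eq_neg_of_add_eq_zero_right h0
                  rw [this]
                  exact p.neg_mem (p.smul_mem c2 hwp)
                exact hx3a0 (hple 0 hx3mem)
              have hzmem : c2 • w + x3 ∈ a 2 ⊓ ((g ⊓ a 0) ⊔ (K ∙ (w + x2))) := by
                constructor
                · exact (a 2).add_mem ((a 2).smul_mem c2 (hple 2 hwp)) hx3q.2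
                · have he : c2 • w + x3 = c1 • x1 + c2 • (w + x2) := by
                    rw [← hyz, smul_add]
                    abel
                  rw [he]
                  exact Submodule.add_mem _
                    (Submodule.mem_sup_left ((g ⊓ a 0).smul_mem c1 hx1q))
                    (Submodule.mem_sup_right
                      ((K ∙ (w + x2)).smul_mem c2 (Submodule.mem_span_singleton_self _)))
              exact (a 2 ⊓ _).ne_bot_iff.mpr ⟨_, hzmem, hz0⟩
          intro i
          refine ⟨hmeets i, ?_⟩
          fin_cases i
          exacts [hP0, hP1, hP2]
end

section
/- Let n ≥ 4, let K and L be division rings, and let V be a K-vector space and W an L-vector space with finrank V = finrank W = n + 1. Every surjective map f from the set of lines of V onto the set of lines of W such that a ∼ b implies f(a) ∼ f(b) for all lines a, b of V, is injective. -/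
set_option linter.unusedSectionVars false

section Aux
open Module Submodule

variable {F E : Type*} [DivisionRing F] [AddCommGroup E] [Module F E] [FiniteDimensional F E]

lemma aux_ne_bot' {p : Submodule F E} (hp : Module.finrank F p ≠ 0) : p ≠ ⊥ := by
  intro h
  rw [h, finrank_bot] at hp
  exact hp rfl

lemma aux_exists_point {x : Submodule F E} (hx : x ≠ ⊥) :
    ∃ p : Submodule F E, p ≤ x ∧ Module.finrank F p = 1 := by
  obtain ⟨w, hw, hw0⟩ := Submodule.exists_mem_ne_zero_of_ne_bot hx
  exact ⟨F ∙ w, (Submodule.span_singleton_le_iff_mem w x).2 hw, finrank_span_singleton hw0⟩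

lemma aux_exists_point_not_le {x p : Submodule F E} (h : ¬ x ≤ p) :
    ∃ z : Submodule F E, z ≤ x ∧ Module.finrank F z = 1 ∧ ¬ z ≤ p := by
  obtain ⟨w, hwx, hwp⟩ := SetLike.not_le_iff_exists.1 h
  have hw0 : w ≠ 0 := by rintro rfl; exact hwp (zero_mem p)
  exact ⟨F ∙ w, (Submodule.span_singleton_le_iff_mem w x).2 hwx, finrank_span_singleton hw0,
    fun hle => hwp (hle (Submodule.mem_span_singleton_self w))⟩

lemma aux_exists_point_not_le' {S : Submodule F E} (h : Module.finrank F S < Module.finrank F E) :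
    ∃ z : Submodule F E, Module.finrank F z = 1 ∧ ¬ z ≤ S := by
  have htop : ¬ (⊤ : Submodule F E) ≤ S := by
    intro hle
    have h2 : Module.finrank F (⊤ : Submodule F E) ≤ Module.finrank F S :=
      Submodule.finrank_mono hle
    rw [finrank_top] at h2
    omega
  obtain ⟨z, _, hz1, hzS⟩ := aux_exists_point_not_le htop
  exact ⟨z, hz1, hzS⟩

lemma aux_point_eq_of_le {p q : Submodule F E} (hp : Module.finrank F p = 1)
    (hq : Module.finrank F q = 1) (h : p ≤ q) : p = q :=
  Submodule.eq_of_le_of_finrank_le h (hq.trans hp.symm).le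

lemma aux_points_inf {p q : Submodule F E} (hp : Module.finrank F p = 1)
    (hq : Module.finrank F q = 1) (hne : p ≠ q) : p ⊓ q = ⊥ := by
  by_contra h
  obtain ⟨r, hr, hr1⟩ := aux_exists_point h
  have h1 : r = p := aux_point_eq_of_le hr1 hp (hr.trans inf_le_left)
  have h2 : r = q := aux_point_eq_of_le hr1 hq (hr.trans inf_le_right)
  exact hne (h1 ▸ h2)

lemma aux_sup_points {p q : Submodule F E} (hp : Module.finrank F p = 1)
    (hq : Module.finrank F q = 1) (hne : p ≠ q) : Module.finrank F ↥(p ⊔ q) = 2 := by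
  have h := Submodule.finrank_sup_add_finrank_inf_eq p q
  rw [aux_points_inf hp hq hne, finrank_bot, hp, hq] at h
  omega

lemma aux_line_eq_sup {p q y : Submodule F E} (hp : Module.finrank F p = 1)
    (hq : Module.finrank F q = 1) (hne : p ≠ q) (hpy : p ≤ y) (hqy : q ≤ y)
    (hy : Module.finrank F y = 2) : y = p ⊔ q :=
  (Submodule.eq_of_le_of_finrank_le (sup_le hpy hqy)
    (by rw [hy, aux_sup_points hp hq hne])).symm

lemma aux_lines_inf {y1 y2 : Submodule F E} (h1 : Module.finrank F y1 = 2)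
    (h2 : Module.finrank F y2 = 2) (hne : y1 ≠ y2) (hint : y1 ⊓ y2 ≠ ⊥) :
    Module.finrank F ↥(y1 ⊓ y2) = 1 := by
  obtain ⟨r, hr, hr1⟩ := aux_exists_point hint
  have hle : Module.finrank F ↥(y1 ⊓ y2) ≤ 2 := h1 ▸ Submodule.finrank_mono inf_le_left
  have hge : 1 ≤ Module.finrank F ↥(y1 ⊓ y2) := hr1 ▸ Submodule.finrank_mono hr
  have hne2 : Module.finrank F ↥(y1 ⊓ y2) ≠ 2 := by
    intro h
    have heq : y1 ⊓ y2 = y1 :=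
      Submodule.eq_of_le_of_finrank_le inf_le_left (by rw [h1, h])
    have hy12 : y1 ≤ y2 := by rw [← heq]; exact inf_le_right
    exact hne (Submodule.eq_of_le_of_finrank_le hy12 (by rw [h1, h2]))
  omega

lemma aux_lines_sup {y1 y2 : Submodule F E} (h1 : Module.finrank F y1 = 2)
    (h2 : Module.finrank F y2 = 2) (hne : y1 ≠ y2) (hint : y1 ⊓ y2 ≠ ⊥) :
    Module.finrank F ↥(y1 ⊔ y2) = 3 := by
  have h := Submodule.finrank_sup_add_finrank_inf_eq y1 y2
  rw [aux_lines_inf h1 h2 hne hint, h1, h2] at h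
  omega

lemma aux_exists_line_le {C : Submodule F E} (h : 2 ≤ Module.finrank F C) :
    ∃ y : Submodule F E, y ≤ C ∧ Module.finrank F y = 2 := by
  have hC : C ≠ ⊥ := aux_ne_bot' (by omega)
  obtain ⟨p, hpC, hp⟩ := aux_exists_point hC
  have hnle : ¬ C ≤ p := by
    intro hle
    have := Submodule.finrank_mono hle
    rw [hp] at this
    omega
  obtain ⟨z, hzC, hz1, hzp⟩ := aux_exists_point_not_le hnle
  have hne : p ≠ z := fun h' => hzp (le_of_eq h'.symm)
  exact ⟨p ⊔ z, sup_le hpC hzC, aux_sup_points hp hz1 hne⟩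

lemma aux_exists_line_disjoint {σ : Submodule F E}
    (h : Module.finrank F σ + 2 ≤ Module.finrank F E) :
    ∃ y : Submodule F E, Module.finrank F y = 2 ∧ y ⊓ σ = ⊥ := by
  obtain ⟨C, hC⟩ := Submodule.exists_isCompl σ
  have hsum := Submodule.finrank_add_eq_of_isCompl hC
  obtain ⟨y, hyC, hy2⟩ := aux_exists_line_le (C := C) (by omega)
  refine ⟨y, hy2, ?_⟩
  have hle : y ⊓ σ ≤ C ⊓ σ := inf_le_inf_right _ hyC
  have hbot : C ⊓ σ = ⊥ := by rw [inf_comm]; exact hC.disjoint.eq_bot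
  exact le_bot_iff.1 (hbot ▸ hle)

end Aux

theorem statement2 {K V L W : Type*}
    [DivisionRing K] [AddCommGroup V] [Module K V]
    [DivisionRing L] [AddCommGroup W] [Module L W]
    {n : ℕ} (hn : 4 ≤ n)
    (hV : Module.finrank K V = n + 1) (hW : Module.finrank L W = n + 1)
    (f : {a : Submodule K V // PLine a} → {b : Submodule L W // PLine b})
    (hsurj : Function.Surjective f)
    (hmeet : ∀ a b : {a : Submodule K V // PLine a},
      PMeets a.1 b.1 → PMeets (f a).1 (f b).1) :
    Function.Injective f := by
  classical
  haveI : FiniteDimensional K V := FiniteDimensional.of_finrank_pos (by rw [hV]; omega)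
  haveI : FiniteDimensional L W := FiniteDimensional.of_finrank_pos (by rw [hW]; omega)
  intro a b hab
  by_contra hne
  have hne' : a.1 ≠ b.1 := fun h => hne (Subtype.ext h)
  -- the two lines are disjoint
  have hdisj : a.1 ⊓ b.1 = ⊥ := by
    by_contra h
    exact (hmeet a b ⟨hne', h⟩).1 (congrArg Subtype.val hab)
  -- any two distinct lines sharing a point meet
  have hstar : ∀ (x y : {a : Submodule K V // PLine a}), x ≠ y →
      ∀ v : Submodule K V, Module.finrank K v = 1 → v ≤ x.1 → v ≤ y.1 → PMeets x.1 y.1 := by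
    intro x y hxy v hv hvx hvy
    refine ⟨fun h => hxy (Subtype.ext h), fun h => ?_⟩
    exact aux_ne_bot' (by rw [hv]; omega) (le_bot_iff.1 (h ▸ le_inf hvx hvy))
  -- every point v has a point P_v of W lying on all images of lines through v
  have hS : ∀ v : Submodule K V, Module.finrank K v = 1 →
      ∃ P : Submodule L W, Module.finrank L P = 1 ∧
        ∀ x : {a : Submodule K V // PLine a}, v ≤ x.1 → P ≤ (f x).1 := by
    intro v hv
    -- construct two distinct lines through v
    obtain ⟨w1, hw1r, hw1v⟩ := aux_exists_point_not_le' (S := v) (by rw [hv, hV]; omega)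
    have hvw1 : v ≠ w1 := fun h => hw1v (le_of_eq h.symm)
    have hx1r : Module.finrank K ↥(v ⊔ w1) = 2 := aux_sup_points hv hw1r hvw1
    obtain ⟨w2, hw2r, hw2x⟩ := aux_exists_point_not_le' (S := v ⊔ w1) (by rw [hx1r, hV]; omega)
    have hvw2 : v ≠ w2 := by
      intro h
      exact hw2x (by rw [← h]; exact le_sup_left)
    have hx2r : Module.finrank K ↥(v ⊔ w2) = 2 := aux_sup_points hv hw2r hvw2
    set x1 : {a : Submodule K V // PLine a} := ⟨v ⊔ w1, hx1r⟩ with hx1def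
    set x2 : {a : Submodule K V // PLine a} := ⟨v ⊔ w2, hx2r⟩ with hx2def
    have hvx1 : v ≤ x1.1 := le_sup_left
    have hvx2 : v ≤ x2.1 := le_sup_left
    have hne12 : x1 ≠ x2 := by
      intro h
      apply hw2x
      rw [show (v ⊔ w1 : Submodule K V) = v ⊔ w2 from congrArg Subtype.val h]
      exact le_sup_right
    have hm12 := hmeet x1 x2 (hstar x1 x2 hne12 v hv hvx1 hvx2)
    have hy1r : Module.finrank L ↥(f x1).1 = 2 := (f x1).2
    have hy2r : Module.finrank L ↥(f x2).1 = 2 := (f x2).2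
    have hEr : Module.finrank L ↥((f x1).1 ⊓ (f x2).1) = 1 :=
      aux_lines_inf hy1r hy2r hm12.1 hm12.2
    by_cases hA : ∀ x : {a : Submodule K V // PLine a}, v ≤ x.1 → (f x1).1 ⊓ (f x2).1 ≤ (f x).1
    · exact ⟨(f x1).1 ⊓ (f x2).1, hEr, hA⟩
    exfalso
    push_neg at hA
    obtain ⟨x3, hvx3, hE3⟩ := hA
    have hσr : Module.finrank L ↥((f x1).1 ⊔ (f x2).1) = 3 :=
      aux_lines_sup hy1r hy2r hm12.1 hm12.2
    have hy1σ : (f x1).1 ≤ (f x1).1 ⊔ (f x2).1 := le_sup_left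
    have hy2σ : (f x2).1 ≤ (f x1).1 ⊔ (f x2).1 := le_sup_right
    -- secant lemma: a line through v whose image misses E maps into σ
    have hsec : ∀ x : {a : Submodule K V // PLine a}, v ≤ x.1 → x ≠ x1 → x ≠ x2 →
        ¬ ((f x1).1 ⊓ (f x2).1 ≤ (f x).1) → (f x).1 ≤ (f x1).1 ⊔ (f x2).1 := by
      intro x hvx hne1 hne2 hEx
      have hm1 := hmeet x x1 (hstar x x1 hne1 v hv hvx hvx1)
      have hm2 := hmeet x x2 (hstar x x2 hne2 v hv hvx hvx2)
      have hF1 : Module.finrank L ↥((f x).1 ⊓ (f x1).1) = 1 :=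
        aux_lines_inf (f x).2 hy1r hm1.1 hm1.2
      have hF2 : Module.finrank L ↥((f x).1 ⊓ (f x2).1) = 1 :=
        aux_lines_inf (f x).2 hy2r hm2.1 hm2.2
      have hne12' : (f x).1 ⊓ (f x1).1 ≠ (f x).1 ⊓ (f x2).1 := by
        intro h
        have hle : (f x).1 ⊓ (f x1).1 ≤ (f x1).1 ⊓ (f x2).1 :=
          le_inf inf_le_right (h ▸ inf_le_right)
        have heq : (f x).1 ⊓ (f x1).1 = (f x1).1 ⊓ (f x2).1 :=
          aux_point_eq_of_le hF1 hEr hle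
        exact hEx (by rw [← heq]; exact inf_le_left)
      have hyeq : (f x).1 = ((f x).1 ⊓ (f x1).1) ⊔ ((f x).1 ⊓ (f x2).1) :=
        aux_line_eq_sup hF1 hF2 hne12' inf_le_left inf_le_left (f x).2
      rw [hyeq]
      exact sup_le (inf_le_right.trans hy1σ) (inf_le_right.trans hy2σ)
    have hx31 : x3 ≠ x1 := by
      intro h
      exact hE3 (by rw [h]; exact inf_le_left)
    have hx32 : x3 ≠ x2 := by
      intro h
      exact hE3 (by rw [h]; exact inf_le_right)
    have hy3σ : (f x3).1 ≤ (f x1).1 ⊔ (f x2).1 := hsec x3 hvx3 hx31 hx32 hE3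
    -- every line through v maps into σ
    have hT : ∀ x : {a : Submodule K V // PLine a}, v ≤ x.1 → (f x).1 ≤ (f x1).1 ⊔ (f x2).1 := by
      intro x hvx
      by_cases he1 : x = x1
      · rw [he1]; exact hy1σ
      by_cases he2 : x = x2
      · rw [he2]; exact hy2σ
      by_cases hEx : (f x1).1 ⊓ (f x2).1 ≤ (f x).1
      · by_cases he3 : x = x3
        · exact absurd (by rw [← he3]; exact hEx) hE3
        have hm3 := hmeet x x3 (hstar x x3 he3 v hv hvx hvx3)
        have hGr : Module.finrank L ↥((f x).1 ⊓ (f x3).1) = 1 :=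
          aux_lines_inf (f x).2 (f x3).2 hm3.1 hm3.2
        have hEG : (f x1).1 ⊓ (f x2).1 ≠ (f x).1 ⊓ (f x3).1 := by
          intro h
          exact hE3 (by rw [h]; exact inf_le_right)
        have hyeq : (f x).1 = ((f x1).1 ⊓ (f x2).1) ⊔ ((f x).1 ⊓ (f x3).1) :=
          aux_line_eq_sup hEr hGr hEG hEx inf_le_left (f x).2
        rw [hyeq]
        exact sup_le (inf_le_left.trans hy1σ) (inf_le_right.trans hy3σ)
      · exact hsec x hvx he1 he2 hEx
    -- contradiction with surjectivity: some line of W misses σ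
    obtain ⟨y0, hy0r, hy0σ⟩ :=
      aux_exists_line_disjoint (σ := (f x1).1 ⊔ (f x2).1) (by rw [hσr, hW]; omega)
    obtain ⟨x, hx⟩ := hsurj ⟨y0, hy0r⟩
    have hfx : (f x).1 = y0 := congrArg Subtype.val hx
    by_cases hvx : v ≤ x.1
    · have h1 : y0 ≤ (f x1).1 ⊔ (f x2).1 := hfx ▸ hT x hvx
      have h2 : y0 = ⊥ := le_bot_iff.1 (by rw [← hy0σ]; exact le_inf le_rfl h1)
      exact aux_ne_bot' (by rw [hy0r]; omega) h2
    · have hxbot : x.1 ≠ ⊥ := aux_ne_bot' (by rw [(x.2 : Module.finrank K ↥x.1 = 2)]; omega)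
      obtain ⟨z, hzx, hzr⟩ := aux_exists_point hxbot
      have hzv : z ≠ v := by
        intro h
        exact hvx (h ▸ hzx)
      have hmr : Module.finrank K ↥(z ⊔ v) = 2 := aux_sup_points hzr hv hzv
      set m : {a : Submodule K V // PLine a} := ⟨z ⊔ v, hmr⟩ with hmdef
      have hfm : (f m).1 ≤ (f x1).1 ⊔ (f x2).1 := hT m le_sup_right
      have hxm : x ≠ m := by
        intro h
        apply hvx
        have : x.1 = z ⊔ v := congrArg Subtype.val h
        rw [this]
        exact le_sup_right
      have hpm := hmeet x m (hstar x m hxm z hzr hzx le_sup_left)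
      apply hpm.2
      rw [hfx]
      have hle : y0 ⊓ (f m).1 ≤ y0 ⊓ ((f x1).1 ⊔ (f x2).1) := inf_le_inf_left y0 hfm
      rw [hy0σ] at hle
      exact le_bot_iff.1 hle
  -- choose the point P_v for each point v
  choose P hPr hPle using hS
  -- points of a and b
  have habot : a.1 ≠ ⊥ := aux_ne_bot' (by rw [(a.2 : Module.finrank K ↥a.1 = 2)]; omega)
  have hbbot : b.1 ≠ ⊥ := aux_ne_bot' (by rw [(b.2 : Module.finrank K ↥b.1 = 2)]; omega)
  obtain ⟨p0, hp0a, hp0r⟩ := aux_exists_point habot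
  obtain ⟨q1, hq1b, hq1r⟩ := aux_exists_point hbbot
  have hq1nb : ¬ b.1 ≤ q1 := by
    intro h
    have := Submodule.finrank_mono h
    rw [(b.2 : Module.finrank K ↥b.1 = 2), hq1r] at this
    omega
  obtain ⟨q2, hq2b, hq2r, hq2q1⟩ := aux_exists_point_not_le hq1nb
  have hq12 : q1 ≠ q2 := fun h => hq2q1 (le_of_eq h.symm)
  -- all points of a and b share the same P
  have key2 : ∀ (p q : Submodule K V) (hp : Module.finrank K p = 1) (hq : Module.finrank K q = 1),
      p ≤ a.1 → q ≤ b.1 → P p hp = P q hq := by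
    intro p q hp hq hpa hqb
    have hpq : p ≠ q := by
      intro h
      apply aux_ne_bot' (p := p) (by rw [hp]; omega)
      exact le_bot_iff.1 (hdisj ▸ le_inf hpa (h ▸ hqb))
    have htr : Module.finrank K ↥(p ⊔ q) = 2 := aux_sup_points hp hq hpq
    set t : {a : Submodule K V // PLine a} := ⟨p ⊔ q, htr⟩ with htdef
    have hta : PMeets t.1 a.1 := by
      refine ⟨?_, ?_⟩
      · intro h
        apply aux_ne_bot' (p := q) (by rw [hq]; omega)
        have hqa : q ≤ a.1 := by rw [← h]; exact le_sup_right
        exact le_bot_iff.1 (hdisj ▸ le_inf hqa hqb)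
      · intro h
        apply aux_ne_bot' (p := p) (by rw [hp]; omega)
        exact le_bot_iff.1 (h ▸ le_inf le_sup_left hpa)
    have hfti := hmeet t a hta
    by_contra hPP
    have hP1 : P p hp ≤ (f t).1 := hPle p hp t le_sup_left
    have hP2 : P q hq ≤ (f t).1 := hPle q hq t le_sup_right
    have hft : (f t).1 = P p hp ⊔ P q hq :=
      aux_line_eq_sup (hPr p hp) (hPr q hq) hPP hP1 hP2 (f t).2
    have hPc1 : P p hp ≤ (f a).1 := hPle p hp a hpa
    have hPc2 : P q hq ≤ (f a).1 := by
      have h2 := hPle q hq b hqb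
      rw [← hab] at h2
      exact h2
    have hle : (f t).1 ≤ (f a).1 := by rw [hft]; exact sup_le hPc1 hPc2
    exact hfti.1 (Submodule.eq_of_le_of_finrank_le hle
      (by rw [((f t).2 : Module.finrank L ↥(f t).1 = 2), ((f a).2 : Module.finrank L ↥(f a).1 = 2)]))
  -- all points share the same P
  have hPall : ∀ (v : Submodule K V) (hv : Module.finrank K v = 1), P v hv = P p0 hp0r := by
    intro v hv
    by_cases hvb : v ≤ b.1
    · exact (key2 p0 v hp0r hv hp0a hvb).symm
    · have e1 : P q1 hq1r = P p0 hp0r := (key2 p0 q1 hp0r hq1r hp0a hq1b).symm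
      have e2 : P q2 hq2r = P p0 hp0r := (key2 p0 q2 hp0r hq2r hp0a hq2b).symm
      by_contra hPv
      have hvq1 : v ≠ q1 := by
        intro h
        exact hvb (by rw [h]; exact hq1b)
      have hvq2 : v ≠ q2 := by
        intro h
        exact hvb (by rw [h]; exact hq2b)
      have hm1r : Module.finrank K ↥(v ⊔ q1) = 2 := aux_sup_points hv hq1r hvq1
      have hm2r : Module.finrank K ↥(v ⊔ q2) = 2 := aux_sup_points hv hq2r hvq2
      set m1 : {a : Submodule K V // PLine a} := ⟨v ⊔ q1, hm1r⟩ with hm1def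
      set m2 : {a : Submodule K V // PLine a} := ⟨v ⊔ q2, hm2r⟩ with hm2def
      have hm12 : m1 ≠ m2 := by
        intro h
        have hval : v ⊔ q1 = v ⊔ q2 := congrArg Subtype.val h
        have hq2m : q2 ≤ v ⊔ q1 := by rw [hval]; exact le_sup_right
        have hb' : b.1 = q1 ⊔ q2 := aux_line_eq_sup hq1r hq2r hq12 hq1b hq2b b.2
        have hbm : b.1 ≤ v ⊔ q1 := by rw [hb']; exact sup_le le_sup_right hq2m
        have hbe : b.1 = v ⊔ q1 := Submodule.eq_of_le_of_finrank_le hbm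
          (by rw [hm1r, (b.2 : Module.finrank K ↥b.1 = 2)])
        exact hvb (by rw [hbe]; exact le_sup_left)
      have hmm := hmeet m1 m2 (hstar m1 m2 hm12 v hv le_sup_left le_sup_left)
      have hfm1 : (f m1).1 = P v hv ⊔ P p0 hp0r := by
        refine aux_line_eq_sup (hPr v hv) (hPr p0 hp0r) hPv (hPle v hv m1 le_sup_left) ?_ (f m1).2
        rw [← e1]
        exact hPle q1 hq1r m1 le_sup_right
      have hfm2 : (f m2).1 = P v hv ⊔ P p0 hp0r := by
        refine aux_line_eq_sup (hPr v hv) (hPr p0 hp0r) hPv (hPle v hv m2 le_sup_left) ?_ (f m2).2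
        rw [← e2]
        exact hPle q2 hq2r m2 le_sup_right
      exact hmm.1 (by rw [hfm1, hfm2])
  -- final contradiction: every image contains P p0, but some line of W misses it
  obtain ⟨y0, hy0r, hy0P⟩ :=
    aux_exists_line_disjoint (σ := P p0 hp0r) (by rw [hPr p0 hp0r, hW]; omega)
  obtain ⟨x, hx⟩ := hsurj ⟨y0, hy0r⟩
  have hxbot : x.1 ≠ ⊥ := aux_ne_bot' (by rw [(x.2 : Module.finrank K ↥x.1 = 2)]; omega)
  obtain ⟨z, hzx, hzr⟩ := aux_exists_point hxbot
  have h1 : P z hzr ≤ (f x).1 := hPle z hzr x hzx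
  rw [hPall z hzr, congrArg Subtype.val hx] at h1
  have h2 : P p0 hp0r = ⊥ := le_bot_iff.1 (by rw [← hy0P]; exact le_inf h1 le_rfl)
  exact aux_ne_bot' (by rw [hPr p0 hp0r]; omega) h2
end

section
/- Let n ≥ 4 be even, let V be a left K-vector space over a division ring K with finrank V = n + 1, and set m = ⌊(n−1)/2⌋ = (n−2)/2. For all lines a₁, b₁ of V the following are equivalent: (i) a₁ = b₁ or a₁ ⊓ b₁ = ⊥; (ii) a₁ = b₁, or there exist lines a₂, …, a_m such that for every line g there exist lines b₂, …, b_{m+1} with: for each 2 ≤ i ≤ m+1, bᵢ meets a_{i−1} and b_{i−1} in two distinct points, and g ∼ b_{m+1}. -/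
/-- `x` meets the lines `y` and `z` in two distinct points. -/
def PMeetsTwo {K V : Type*} [DivisionRing K] [AddCommGroup V] [Module K V]
    (x y z : Submodule K V) : Prop := PMeets x y ∧ PMeets x z ∧ x ⊓ y ≠ x ⊓ z

open Module Submodule

section Chains

variable {K V : Type*} [DivisionRing K] [AddCommGroup V] [Module K V]

lemma PLine.exists_mem_span_singleton {b : Submodule K V} (hb : PLine b) {s : V} (hs : s ∈ b) :
    ∃ P ∈ b, P ≠ 0 ∧ s ∈ K ∙ P := by
  by_cases hs0 : s = 0
  · obtain ⟨P, hP, hP0⟩ := (Submodule.ne_bot_iff b).1 (by rintro rfl; simp [PLine] at hb)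
    exact ⟨P, hP, hP0, hs0 ▸ zero_mem _⟩
  · exact ⟨s, hs, hs0, mem_span_singleton_self s⟩

def supChain (b : Submodule K V) (a : ℕ → Submodule K V) : ℕ → Submodule K V
  | 0 => b
  | k + 1 => supChain b a k ⊔ a (k + 1)

lemma supChain_congr (b : Submodule K V) {a a' : ℕ → Submodule K V} {k : ℕ}
    (h : ∀ i ≤ k, a i = a' i) : supChain b a k = supChain b a' k := by
  induction k with
  | zero => rfl
  | succ k ih => rw [supChain, supChain, ih fun i hi => h i (by omega), h (k + 1) le_rfl]

def SkewLines (b : Submodule K V) (a : ℕ → Submodule K V) (k : ℕ) : Prop :=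
  ∀ i < k, PLine (a (i + 1)) ∧ Disjoint (supChain b a i) (a (i + 1))

lemma SkewLines.mono {b : Submodule K V} {a : ℕ → Submodule K V} {j k : ℕ}
    (h : SkewLines b a k) (hjk : j ≤ k) : SkewLines b a j :=
  fun i hi => h i (by omega)

lemma SkewLines.pLine {b : Submodule K V} {a : ℕ → Submodule K V} {i k : ℕ}
    (h : SkewLines b a k) (hi : 1 ≤ i) (hik : i ≤ k) : PLine (a i) := by
  obtain ⟨j, rfl⟩ : ∃ j, i = j + 1 := ⟨i - 1, by omega⟩
  exact (h j (by omega)).1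

def MeetChain (a b : ℕ → Submodule K V) (k : ℕ) : Prop :=
  ∀ i, 2 ≤ i → i ≤ k → PLine (b i) ∧ PMeetsTwo (b i) (a (i - 1)) (b (i - 1))

lemma MeetChain.update {a b : ℕ → Submodule K V} {k : ℕ} (h : MeetChain a b k)
    {c : Submodule K V} (hc : PLine c) (hcm : PMeetsTwo c (a k) (b k)) :
    MeetChain a (Function.update b (k + 1) c) (k + 1) := by
  intro i hi hik
  rcases Nat.lt_or_eq_of_le hik with hlt | rfl
  · rw [Function.update_of_ne (by omega), Function.update_of_ne (by omega)]
    exact h i hi (by omega)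
  · rw [Function.update_self, Nat.add_sub_cancel, Function.update_of_ne (by omega)]
    exact ⟨hc, hcm⟩

end Chains

section Lines

variable {K V : Type*} [DivisionRing K] [AddCommGroup V] [Module K V] [FiniteDimensional K V]

lemma PLine.eq_of_le {a b : Submodule K V} (ha : PLine a) (hb : PLine b) (h : a ≤ b) :
    a = b :=
  eq_of_le_of_finrank_le h (by rw [ha, hb])

lemma PLine.inf_ne_bot {g W : Submodule K V} (hg : PLine g)
    (h : finrank K V < finrank K W + 2) : g ⊓ W ≠ ⊥ := by
  intro hbot
  have := finrank_add_finrank_le_of_disjoint (disjoint_iff.2 hbot)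
  rw [hg] at this
  omega

lemma exists_pLine_disjoint {W : Submodule K V} (h : finrank K W + 2 ≤ finrank K V) :
    ∃ g, PLine g ∧ Disjoint W g := by
  obtain ⟨v, -, hv⟩ := SetLike.exists_of_lt (lt_top_of_finrank_lt_finrank (s := W) (by omega))
  have hWv := finrank_sup_span_singleton hv
  obtain ⟨w, -, hw⟩ := SetLike.exists_of_lt
    (lt_top_of_finrank_lt_finrank (s := W ⊔ K ∙ v) (by omega))
  have hWvw := finrank_sup_span_singleton hw
  have hv0 : v ≠ 0 := fun h => hv (h ▸ zero_mem _)
  have hwv : w ∉ K ∙ v := fun h => hw (mem_sup_right h)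
  have hline : PLine ((K ∙ v) ⊔ (K ∙ w)) := by
    rw [PLine, finrank_sup_span_singleton hwv, finrank_span_singleton hv0]
  refine ⟨_, hline, disjoint_iff.2 <| (Submodule.finrank_eq_zero).1 ?_⟩
  have := finrank_sup_add_finrank_inf_eq W ((K ∙ v) ⊔ (K ∙ w))
  rw [← sup_assoc, hWvw, hWv, hline] at this
  omega

lemma PMeetsTwo.le_sup {x y z : Submodule K V} (hx : PLine x) (h : PMeetsTwo x y z) :
    x ≤ y ⊔ z := by
  obtain ⟨⟨-, hy⟩, ⟨-, hz⟩, hyz⟩ := h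
  set S := (x ⊓ y) ⊔ (x ⊓ z)
  suffices hS : S = x from hS ▸ sup_le_sup inf_le_right inf_le_right
  refine eq_of_le_of_finrank_le (sup_le inf_le_left inf_le_left) ?_
  by_contra! hlt
  have eq_S : ∀ p, p ≠ ⊥ → p ≤ S → p = S := fun p hp hpS =>
    eq_of_le_of_finrank_le hpS (by rw [hx] at hlt; have := one_le_finrank_iff.2 hp; omega)
  exact hyz ((eq_S _ hy le_sup_left).trans (eq_S _ hz le_sup_right).symm)

lemma pLine_pMeetsTwo_span_pair {A B : Submodule K V} (hAB : Disjoint A B) {P x : V}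
    (hP : P ∈ B) (hP0 : P ≠ 0) (hx : x ∈ A) (hx0 : x ≠ 0) :
    PLine ((K ∙ P) ⊔ (K ∙ x)) ∧ PMeetsTwo ((K ∙ P) ⊔ (K ∙ x)) A B := by
  have eq_zero := disjoint_def.1 hAB
  have hxP : x ∉ K ∙ P := fun h => hx0 (eq_zero x hx ((span_singleton_le_iff_mem _ _).2 hP h))
  have hPc : P ∈ (K ∙ P) ⊔ (K ∙ x) := mem_sup_left (mem_span_singleton_self P)
  have hxc : x ∈ (K ∙ P) ⊔ (K ∙ x) := mem_sup_right (mem_span_singleton_self x)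
  have hxA : x ∈ ((K ∙ P) ⊔ (K ∙ x)) ⊓ A := mem_inf.2 ⟨hxc, hx⟩
  have hPB : P ∈ ((K ∙ P) ⊔ (K ∙ x)) ⊓ B := mem_inf.2 ⟨hPc, hP⟩
  refine ⟨by rw [PLine, finrank_sup_span_singleton hxP, finrank_span_singleton hP0],
    ⟨fun h => hP0 (eq_zero P (h ▸ hPc) hP), (Submodule.ne_bot_iff _).2 ⟨x, hxA, hx0⟩⟩,
    ⟨fun h => hx0 (eq_zero x hx (h ▸ hxc)), (Submodule.ne_bot_iff _).2 ⟨P, hPB, hP0⟩⟩,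
    fun h => hx0 (eq_zero x hx (mem_inf.1 (h ▸ hxA)).2)⟩

lemma exists_pMeetsTwo_mem {A B : Submodule K V} (hA : PLine A) (hB : PLine B)
    (hAB : Disjoint A B) {p : V} (hp : p ∈ A ⊔ B) :
    ∃ c, PLine c ∧ PMeetsTwo c A B ∧ c ≤ A ⊔ B ∧ p ∈ c := by
  obtain ⟨r, hr, s, hs, rfl⟩ := mem_sup.1 hp
  obtain ⟨P, hP, hP0, hsP⟩ := hB.exists_mem_span_singleton hs
  obtain ⟨x, hx, hx0, hrx⟩ := hA.exists_mem_span_singleton hr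
  obtain ⟨hc, hcm⟩ := pLine_pMeetsTwo_span_pair hAB hP hP0 hx hx0
  refine ⟨_, hc, hcm, sup_le ?_ ?_, add_mem (mem_sup_right hrx) (mem_sup_left hsP)⟩
  · exact (span_singleton_le_iff_mem _ _).2 (mem_sup_right hP)
  · exact (span_singleton_le_iff_mem _ _).2 (mem_sup_left hx)

lemma exists_pMeetsTwo_pMeets {A B g : Submodule K V} (hA : PLine A) (hB : PLine B)
    (hAB : Disjoint A B) (hg : PLine g) {p : V} (hpg : p ∈ g) (hp : p ∈ A ⊔ B) (hp0 : p ≠ 0) :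
    ∃ c, PLine c ∧ PMeetsTwo c A B ∧ PMeets g c := by
  obtain ⟨c, hc, hcm, -, hpc⟩ := exists_pMeetsTwo_mem hA hB hAB hp
  by_cases hgc : g = c
  · subst hgc
    -- `g` itself is the line found: rotate it about its point on `B` to another point of `A`
    obtain ⟨P, hP, hP0⟩ := (Submodule.ne_bot_iff _).1 hcm.2.1.2
    obtain ⟨x, hxA, hxg⟩ := SetLike.not_le_iff_exists.1 fun h => hcm.1.1 (hA.eq_of_le hg h).symm
    have hx0 : x ≠ 0 := fun h => hxg (h ▸ zero_mem _)
    obtain ⟨hc', hcm'⟩ := pLine_pMeetsTwo_span_pair hAB (mem_inf.1 hP).2 hP0 hxA hx0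
    refine ⟨_, hc', hcm', fun h => hxg (h ▸ mem_sup_right (mem_span_singleton_self x)), ?_⟩
    exact (Submodule.ne_bot_iff _).2
      ⟨P, mem_inf.2 ⟨(mem_inf.1 hP).1, mem_sup_left (mem_span_singleton_self P)⟩, hP0⟩
  · exact ⟨c, hc, hcm, hgc, (Submodule.ne_bot_iff _).2 ⟨p, mem_inf.2 ⟨hpg, hpc⟩, hp0⟩⟩

end Lines

section Configuration

variable {K V : Type*} [DivisionRing K] [AddCommGroup V] [Module K V] [FiniteDimensional K V]
  {a : ℕ → Submodule K V}

lemma SkewLines.finrank_supChain {b : Submodule K V} {k : ℕ} (h : SkewLines b a k) :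
    finrank K (supChain b a k) = finrank K b + 2 * k := by
  induction k with
  | zero => rfl
  | succ k ih =>
    obtain ⟨hline, hdisj⟩ := h k k.lt_succ_self
    have := finrank_sup_add_finrank_inf_eq (supChain b a k) (a (k + 1))
    rw [hdisj.eq_bot, finrank_bot, hline, ih (h.mono k.le_succ)] at this
    rw [supChain]
    omega

lemma finrank_supChain_le (b : Submodule K V) {k : ℕ}
    (ha : ∀ i, 2 ≤ i → i ≤ k + 1 → PLine (a i)) :
    finrank K (supChain b a (k + 1)) ≤ finrank K ↥(b ⊔ a 1) + 2 * k := by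
  induction k with
  | zero => rfl
  | succ k ih =>
    have := finrank_add_le_finrank_add_finrank (supChain b a (k + 1)) (a (k + 2))
    rw [ha (k + 2) (by omega) le_rfl] at this
    have := ih fun i hi hik => ha i hi (by omega)
    change finrank K ↥(supChain b a (k + 1) ⊔ a (k + 2)) ≤ _
    omega

lemma exists_skewLines {b a₁ : Submodule K V} (ha₁ : PLine a₁) (hd : Disjoint b a₁) :
    ∀ k, finrank K b + 2 * (k + 1) ≤ finrank K V →
      ∃ a : ℕ → Submodule K V, a 1 = a₁ ∧ SkewLines b a (k + 1)
  | 0, _ => ⟨fun _ => a₁, rfl, fun i hi => by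
    obtain rfl : i = 0 := (by omega)
    exact ⟨ha₁, hd⟩⟩
  | k + 1, hk => by
    obtain ⟨a, ha1, ha⟩ := exists_skewLines ha₁ hd k (by omega)
    obtain ⟨g, hg, hgd⟩ := exists_pLine_disjoint (W := supChain b a (k + 1))
      (by rw [ha.finrank_supChain]; omega)
    refine ⟨Function.update a (k + 2) g, by rw [Function.update_of_ne (by omega), ha1],
      fun i hi => ?_⟩
    rw [supChain_congr b (a' := a) fun j hj => Function.update_of_ne (by omega) _ _]
    rcases Nat.lt_or_eq_of_le (Nat.le_of_lt_succ hi) with hlt | rfl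
    · rw [Function.update_of_ne (by omega)]
      exact ha i hlt
    · rw [Function.update_self]
      exact ⟨hg, hgd⟩

lemma SkewLines.exists_meetChain_mem {b₁ : Submodule K V} (hb₁ : PLine b₁) :
    ∀ {j}, SkewLines b₁ a j → ∀ q ∈ supChain b₁ a j, ∃ b : ℕ → Submodule K V, b 1 = b₁ ∧
      MeetChain a b (j + 1) ∧ PLine (b (j + 1)) ∧ b (j + 1) ≤ supChain b₁ a j ∧ q ∈ b (j + 1)
  | 0, _, q, hq => ⟨fun _ => b₁, rfl, fun i _ _ => by omega, hb₁, le_rfl, hq⟩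
  | j + 1, ha, q, hq => by
    obtain ⟨s, hs, r, hr, rfl⟩ := mem_sup.1 hq
    obtain ⟨b, hb1, hchain, hb, hbW, hsb⟩ := (ha.mono j.le_succ).exists_meetChain_mem hb₁ s hs
    obtain ⟨haj, hdisj⟩ := ha j j.lt_succ_self
    obtain ⟨c, hc, hcm, hcle, hqc⟩ := exists_pMeetsTwo_mem haj hb (hdisj.mono_left hbW).symm
      (mem_sup.2 ⟨r, hr, s, hsb, add_comm r s⟩)
    refine ⟨Function.update b (j + 2) c, by rw [Function.update_of_ne (by omega), hb1],
      hchain.update hc hcm, ?_, ?_, ?_⟩ <;> rw [Function.update_self]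
    · exact hc
    · exact hcle.trans (sup_le le_sup_right (hbW.trans le_sup_left))
    · exact hqc

lemma SkewLines.exists_meetChain_pMeets {b₁ : Submodule K V} {k : ℕ} (hb₁ : PLine b₁)
    (ha : SkewLines b₁ a (k + 1)) {g : Submodule K V} (hg : PLine g)
    (hgW : g ⊓ supChain b₁ a (k + 1) ≠ ⊥) :
    ∃ b : ℕ → Submodule K V, b 1 = b₁ ∧ MeetChain a b (k + 2) ∧ PMeets g (b (k + 2)) := by
  obtain ⟨p, hp, hp0⟩ := (Submodule.ne_bot_iff _).1 hgW
  obtain ⟨hpg, hpW⟩ := mem_inf.1 hp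
  obtain ⟨s, hs, r, hr, rfl⟩ := mem_sup.1 hpW
  obtain ⟨b, hb1, hchain, hb, hbW, hsb⟩ := (ha.mono k.le_succ).exists_meetChain_mem hb₁ s hs
  obtain ⟨hak, hdisj⟩ := ha k k.lt_succ_self
  obtain ⟨c, hc, hcm, hgc⟩ := exists_pMeetsTwo_pMeets hak hb (hdisj.mono_left hbW).symm hg hpg
    (mem_sup.2 ⟨r, hr, s, hsb, add_comm r s⟩) hp0
  exact ⟨Function.update b (k + 2) c, by rw [Function.update_of_ne (by omega), hb1],
    hchain.update hc hcm, by rwa [Function.update_self]⟩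

lemma MeetChain.le_supChain {b : ℕ → Submodule K V} {k : ℕ} (h : MeetChain a b (k + 1)) :
    ∀ j ≤ k, b (j + 1) ≤ supChain (b 1) a j
  | 0, _ => le_rfl
  | j + 1, hj => by
    obtain ⟨hline, hmeet⟩ := h (j + 2) (by omega) (by omega)
    calc b (j + 2) ≤ a (j + 1) ⊔ b (j + 1) := hmeet.le_sup hline
      _ ≤ supChain (b 1) a (j + 1) :=
        sup_le le_sup_right ((h.le_supChain j (by omega)).trans le_sup_left)

end Configuration

theorem statement3 {K V : Type*} [DivisionRing K] [AddCommGroup V] [Module K V]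
    {n m : ℕ} (hn : 4 ≤ n) (hne : Even n) (hm : m = (n - 1) / 2)
    (hdim : Module.finrank K V = n + 1)
    (a₁ b₁ : Submodule K V) (ha₁ : PLine a₁) (hb₁ : PLine b₁) :
    (a₁ = b₁ ∨ a₁ ⊓ b₁ = ⊥) ↔
    (a₁ = b₁ ∨ ∃ a : ℕ → Submodule K V, a 1 = a₁ ∧
      (∀ i, 2 ≤ i → i ≤ m → PLine (a i)) ∧
      ∀ g : Submodule K V, PLine g → ∃ b : ℕ → Submodule K V, b 1 = b₁ ∧
        (∀ i, 2 ≤ i → i ≤ m + 1 → PLine (b i)) ∧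
        (∀ i, 2 ≤ i → i ≤ m + 1 → PMeetsTwo (b i) (a (i - 1)) (b (i - 1))) ∧
        PMeets g (b (m + 1))) := by
  have : FiniteDimensional K V := Module.finite_of_finrank_pos (by omega)
  obtain ⟨k, rfl⟩ : ∃ k, m = k + 1 := ⟨m - 1, by omega⟩
  have hV : finrank K V = 2 * k + 5 := by obtain ⟨t, rfl⟩ := hne; omega
  constructor
  · rintro (h | h)
    · exact Or.inl h
    obtain ⟨a, ha1, ha⟩ := exists_skewLines ha₁ (disjoint_iff.2 (inf_comm a₁ b₁ ▸ h)) k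
      (by rw [hb₁, hV]; omega)
    refine Or.inr ⟨a, ha1, fun i hi hik => ha.pLine (by omega) hik, fun g hg => ?_⟩
    obtain ⟨b, hb1, hchain, hgb⟩ := ha.exists_meetChain_pMeets hb₁ hg
      (hg.inf_ne_bot (by rw [ha.finrank_supChain, hb₁, hV]; omega))
    exact ⟨b, hb1, fun i hi hik => (hchain i hi hik).1, fun i hi hik => (hchain i hi hik).2, hgb⟩
  · rintro (h | ⟨a, ha1, ha, hchain⟩)
    · exact Or.inl h
    refine Or.inr (by_contra fun hab => ?_)
    have hplane := finrank_sup_add_finrank_inf_eq b₁ a₁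
    have := one_le_finrank_iff.2 (inf_comm a₁ b₁ ▸ hab : b₁ ⊓ a₁ ≠ ⊥)
    have hW := finrank_supChain_le b₁ ha
    rw [ha1] at hW
    obtain ⟨g, hg, hgW⟩ := exists_pLine_disjoint (W := supChain b₁ a (k + 1))
      (by rw [ha₁, hb₁] at hplane; omega)
    obtain ⟨b, hb1, hbl, hbm, hgb⟩ := hchain g hg
    have hbW := MeetChain.le_supChain (fun i hi hik => ⟨hbl i hi hik, hbm i hi hik⟩) (k + 1) le_rfl
    rw [hb1] at hbW
    exact hgb.2 (eq_bot_iff.2 ((inf_le_inf_left g hbW).trans hgW.symm.eq_bot.le))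
end

section
/- Let V be a left K-vector space over a division ring K with finrank V = 4. For all lines a₁, a₂, a₃ of V the following are equivalent: (i) for all lines g₁, g₂ there exist lines x₁, x₂, x₃ such that gⱼ ∼ xᵢ for all j ∈ {1,2} and i ∈ {1,2,3}; for each i ∈ {1,2,3} (indices mod 3): xᵢ ≃ aᵢ, xᵢ ≃ aᵢ₊₁ and aᵢ ∼ aᵢ₊₁; and xᵢ ≠ xᵢ₊₁ for some i ∈ {1,2,3}; (ii) (a₁,a₂,a₃) is a T-triple, i.e. a triangle or a tripod. -/
/-- `a ≃ b`: the lines intersect or coincide. -/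
def PMeetsOrEq {K V : Type*} [DivisionRing K] [AddCommGroup V] [Module K V]
    (a b : Submodule K V) : Prop := PMeets a b ∨ a = b

/-- The three lines `a, b, c` pass through a common point. -/
def PConcurrent3 {K V : Type*} [DivisionRing K] [AddCommGroup V] [Module K V]
    (a b c : Submodule K V) : Prop :=
  ∃ p : Submodule K V, PPoint p ∧ p ≤ a ∧ p ≤ b ∧ p ≤ c

/-- `(a,b,c)` is a triangle (trilateral): pairwise distinct, pairwise intersecting,
not concurrent lines. -/
def Triangle {K V : Type*} [DivisionRing K] [AddCommGroup V] [Module K V]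
    (a b c : Submodule K V) : Prop :=
  a ≠ b ∧ a ≠ c ∧ b ≠ c ∧ PMeets a b ∧ PMeets a c ∧ PMeets b c ∧ ¬ PConcurrent3 a b c

/-- `(a,b,c)` is a tripod: pairwise distinct concurrent lines not lying in a common plane. -/
def Tripod {K V : Type*} [DivisionRing K] [AddCommGroup V] [Module K V]
    (a b c : Submodule K V) : Prop :=
  a ≠ b ∧ a ≠ c ∧ b ≠ c ∧ PConcurrent3 a b c ∧ a ⊔ b ⊔ c = ⊤

/-- A T-triple is a triangle or a tripod. -/
def TTriple {K V : Type*} [DivisionRing K] [AddCommGroup V] [Module K V]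
    (a b c : Submodule K V) : Prop := Triangle a b c ∨ Tripod a b c

/-- Two T-triples are of the same type. -/
def SameType {K V : Type*} [DivisionRing K] [AddCommGroup V] [Module K V]
    (a b c a' b' c' : Submodule K V) : Prop :=
  (Triangle a b c ∧ Triangle a' b' c') ∨ (Tripod a b c ∧ Tripod a' b' c')

/-- Two T-triples are of opposite type. -/
def OppType {K V : Type*} [DivisionRing K] [AddCommGroup V] [Module K V]
    (a b c a' b' c' : Submodule K V) : Prop :=
  (Triangle a b c ∧ Tripod a' b' c') ∨ (Tripod a b c ∧ Triangle a' b' c')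

set_option linter.unusedSectionVars false
set_option linter.unusedVariables false

section Helpers
open Module Submodule

variable {K V : Type*} [DivisionRing K] [AddCommGroup V] [Module K V]

lemma pmeets_symm {a b : Submodule K V} (h : PMeets a b) : PMeets b a :=
  ⟨h.1.symm, by rw [inf_comm]; exact h.2⟩

lemma pmoe_of_inf {a b : Submodule K V} (h : a ⊓ b ≠ ⊥) : PMeetsOrEq a b := by
  by_cases hab : a = b
  · exact Or.inr hab
  · exact Or.inl ⟨hab, h⟩

variable [FiniteDimensional K V]

lemma frk_pos {s : Submodule K V} (h : s ≠ ⊥) : 1 ≤ Module.finrank K s :=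
  Submodule.one_le_finrank_iff.2 h

lemma frk_sup_inf (s t : Submodule K V) :
    Module.finrank K ↑(s ⊔ t) + Module.finrank K ↑(s ⊓ t)
      = Module.finrank K s + Module.finrank K t :=
  Submodule.finrank_sup_add_finrank_inf_eq s t

/-- If two submodules of `F` have total rank exceeding that of `F`, they meet. -/
lemma inf_ne_bot_of_frk {s t F : Submodule K V} (hs : s ≤ F) (ht : t ≤ F)
    (h : Module.finrank K F < Module.finrank K s + Module.finrank K t) : s ⊓ t ≠ ⊥ := by
  intro hbot
  have h1 := frk_sup_inf s t
  rw [hbot, finrank_bot, add_zero] at h1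
  have h2 : Module.finrank K ↑(s ⊔ t) ≤ Module.finrank K F :=
    Submodule.finrank_mono (sup_le hs ht)
  omega

lemma eq_of_le_frk {s t : Submodule K V} (h : s ≤ t)
    (hr : Module.finrank K t ≤ Module.finrank K s) : s = t :=
  Submodule.eq_of_le_of_finrank_le h hr

/-- A nonzero submodule contained in a point equals the point. -/
lemma eq_point_of_le {s P : Submodule K V} (hP : PPoint P) (h : s ≤ P) (hs : s ≠ ⊥) :
    s = P := eq_of_le_frk h (by rw [hP]; exact frk_pos hs)

lemma point_le_of_inf {s P : Submodule K V} (hP : PPoint P) (h : P ⊓ s ≠ ⊥) : P ≤ s := by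
  have : P ⊓ s = P := eq_point_of_le hP inf_le_left h
  rw [← this]; exact inf_le_right

lemma point_span {w : V} (hw : w ≠ 0) : PPoint (K ∙ w) := finrank_span_singleton hw

lemma exists_point_le {s : Submodule K V} (h : s ≠ ⊥) :
    ∃ w : V, w ≠ 0 ∧ w ∈ s := by
  obtain ⟨w, hws, hw⟩ := (Submodule.ne_bot_iff s).1 h
  exact ⟨w, hw, hws⟩

/-- Two distinct points are disjoint. -/
lemma points_disjoint {P Q : Submodule K V} (hP : PPoint P) (hQ : PPoint Q) (h : P ≠ Q) :
    P ⊓ Q = ⊥ := by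
  by_contra hne
  have h1 : P ⊓ Q = P := eq_point_of_le hP inf_le_left hne
  have h2 : P ⊓ Q = Q := eq_point_of_le hQ inf_le_right hne
  exact h (h1 ▸ h2)

lemma line_sup_points {P Q : Submodule K V} (hP : PPoint P) (hQ : PPoint Q) (h : P ≠ Q) :
    PLine (P ⊔ Q) := by
  have := frk_sup_inf P Q
  rw [points_disjoint hP hQ h, finrank_bot, add_zero, hP, hQ] at this
  exact this

lemma point_ne_of_not_mem {P : Submodule K V} {w : V} (hP : PPoint P) (hw : w ≠ 0)
    (h : w ∉ P) : P ≠ K ∙ w := by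
  intro he
  exact h (he ▸ Submodule.mem_span_singleton_self w)

/-- A line through a point `P` and a vector `w` outside `P`. -/
lemma line_point_vec {P : Submodule K V} {w : V} (hP : PPoint P) (hw : w ≠ 0)
    (h : w ∉ P) : PLine (P ⊔ (K ∙ w)) :=
  line_sup_points hP (point_span hw) (point_ne_of_not_mem hP hw h)

end Helpers

section LemA
open Module Submodule

variable {K V : Type*} [DivisionRing K] [AddCommGroup V] [Module K V]
variable [FiniteDimensional K V]

lemma inf_ne_bot_of_mem {s t : Submodule K V} {w : V} (hw : w ≠ 0) (h1 : w ∈ s) (h2 : w ∈ t) :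
    s ⊓ t ≠ ⊥ :=
  (Submodule.ne_bot_iff _).2 ⟨w, ⟨h1, h2⟩, hw⟩

lemma line_eq_of_le {g₁ g₂ : Submodule K V} (hg₁ : PLine g₁) (hg₂ : PLine g₂)
    (h : g₁ ≤ g₂) : g₁ = g₂ := eq_of_le_frk h (by rw [hg₁, hg₂])

lemma point_ne_bot {P : Submodule K V} (hP : PPoint P) : P ≠ ⊥ := by
  intro h; subst h; simp only [PPoint, finrank_bot] at hP; omega

lemma mixed_transversal (hdim : Module.finrank K V = 4)
    {P g₁ g₂ : Submodule K V} (hP : PPoint P) (hg₁ : PLine g₁) (hg₂ : PLine g₂)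
    (h1 : P ≤ g₁) (h2 : ¬ P ≤ g₂) :
    ∃ x : Submodule K V, PLine x ∧ P ≤ x ∧ PMeets g₁ x ∧ PMeets g₂ x := by
  have hne : ¬ g₂ ≤ g₁ := by
    intro hle
    exact h2 ((line_eq_of_le hg₂ hg₁ hle) ▸ h1)
  obtain ⟨w, hw2, hw1⟩ := SetLike.not_le_iff_exists.1 hne
  have hw0 : w ≠ 0 := fun h => hw1 (h ▸ g₁.zero_mem)
  have hwP : w ∉ P := fun h => hw1 (h1 h)
  refine ⟨P ⊔ (K ∙ w), line_point_vec hP hw0 hwP, le_sup_left, ⟨?_, ?_⟩, ?_, ?_⟩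
  · intro h; exact hw1 (h ▸ (Submodule.mem_sup_right (Submodule.mem_span_singleton_self w)))
  · exact fun h => point_ne_bot hP (le_bot_iff.1 (h ▸ (le_inf h1 le_sup_left)))
  · intro h; exact h2 (h ▸ le_sup_left)
  · exact inf_ne_bot_of_mem hw0 hw2 (Submodule.mem_sup_right (Submodule.mem_span_singleton_self w))

/-- Through every point there is a line meeting two given lines (and distinct from them). -/
lemma point_transversal (hdim : Module.finrank K V = 4)
    {P g₁ g₂ : Submodule K V} (hP : PPoint P) (hg₁ : PLine g₁) (hg₂ : PLine g₂) :
    ∃ x : Submodule K V, PLine x ∧ P ≤ x ∧ PMeets g₁ x ∧ PMeets g₂ x := by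
  by_cases h1 : P ≤ g₁ <;> by_cases h2 : P ≤ g₂
  · -- P on both lines: take any line through P outside g₁ ⊔ g₂
    have hsup : Module.finrank K ↑(g₁ ⊔ g₂) ≤ 3 := by
      have h := frk_sup_inf g₁ g₂
      have : P ≤ g₁ ⊓ g₂ := le_inf h1 h2
      have hge : 1 ≤ Module.finrank K ↑(g₁ ⊓ g₂) := by
        calc 1 = Module.finrank K P := hP.symm
        _ ≤ _ := Submodule.finrank_mono this
      rw [hg₁, hg₂] at h; omega
    have hne : g₁ ⊔ g₂ ≠ ⊤ := by
      intro h; rw [h, finrank_top] at hsup; omega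
    have hlt : g₁ ⊔ g₂ < ⊤ := lt_top_iff_ne_top.2 hne
    obtain ⟨v, -, hv⟩ := SetLike.exists_of_lt hlt
    have hv0 : v ≠ 0 := fun h => hv (h ▸ (g₁ ⊔ g₂).zero_mem)
    have hvP : v ∉ P := fun h => hv (Submodule.mem_sup_left (h1 h))
    refine ⟨P ⊔ (K ∙ v), line_point_vec hP hv0 hvP, le_sup_left, ⟨?_, ?_⟩, ?_, ?_⟩
    · intro h
      exact hv (Submodule.mem_sup_left (h ▸ (Submodule.mem_sup_right (Submodule.mem_span_singleton_self v))))
    · exact fun h => point_ne_bot hP (le_bot_iff.1 (h ▸ (le_inf h1 le_sup_left)))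
    · intro h
      exact hv (Submodule.mem_sup_right (h ▸ (Submodule.mem_sup_right (Submodule.mem_span_singleton_self v))))
    · exact fun h => point_ne_bot hP (le_bot_iff.1 (h ▸ (le_inf h2 le_sup_left)))
  · exact mixed_transversal hdim hP hg₁ hg₂ h1 h2
  · obtain ⟨x, hx, hPx, hm2, hm1⟩ := mixed_transversal hdim hP hg₂ hg₁ h2 h1
    exact ⟨x, hx, hPx, hm1, hm2⟩
  · -- P on neither line
    have hPg : P ⊓ g₁ = ⊥ := by
      by_contra h
      exact h1 (point_le_of_inf hP h)
    have hF : Module.finrank K ↑(P ⊔ g₁) = 3 := by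
      have h := frk_sup_inf P g₁
      rw [hPg, finrank_bot, add_zero, hP, hg₁] at h; exact h
    have hmeet : g₂ ⊓ (P ⊔ g₁) ≠ ⊥ := by
      apply inf_ne_bot_of_frk le_top le_top
      rw [finrank_top, hdim, hg₂, hF]; omega
    obtain ⟨w, hw0, hw⟩ := exists_point_le hmeet
    have hwP : w ∉ P := by
      intro h
      have : P = K ∙ w := (eq_point_of_le hP (by
        rw [Submodule.span_singleton_le_iff_mem]; exact h) (by
        simp [Submodule.span_singleton_eq_bot, hw0])).symm ▸ rfl
      -- simpler: P ≤ g₂ follows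
      exact h2 (by
        have hle : (K ∙ w) ≤ g₂ := by
          rw [Submodule.span_singleton_le_iff_mem]; exact hw.1
        have hPw : P = K ∙ w := by
          apply (eq_point_of_le hP ?_ ?_).symm
          · rw [Submodule.span_singleton_le_iff_mem]; exact h
          · simp [Submodule.span_singleton_eq_bot, hw0]
        rw [hPw]; exact hle)
    refine ⟨P ⊔ (K ∙ w), line_point_vec hP hw0 hwP, le_sup_left, ⟨?_, ?_⟩, ?_, ?_⟩
    · intro h; exact h1 (h ▸ le_sup_left)
    · -- g₁ and x lie in the plane P ⊔ g₁
      apply inf_ne_bot_of_frk (le_sup_right (a := P)) ?_ ?_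
      · apply sup_le le_sup_left
        rw [Submodule.span_singleton_le_iff_mem]; exact hw.2
      · rw [hF, hg₁, line_point_vec hP hw0 hwP]; omega
    · intro h; exact h2 (h ▸ le_sup_left)
    · exact inf_ne_bot_of_mem hw0 hw.1 (Submodule.mem_sup_right (Submodule.mem_span_singleton_self w))

end LemA

section LemB
open Module Submodule

variable {K V : Type*} [DivisionRing K] [AddCommGroup V] [Module K V]
variable [FiniteDimensional K V]

lemma line_ne_bot {g : Submodule K V} (hg : PLine g) : g ≠ ⊥ := by
  intro h; subst h; simp only [PLine, finrank_bot] at hg; omega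

lemma not_le_of_frk {s t : Submodule K V}
    (h : Module.finrank K t < Module.finrank K s) : ¬ s ≤ t := by
  intro hle
  exact absurd (Submodule.finrank_mono hle) (by omega)

lemma exists_not_mem_two {E s t : Submodule K V} (hs : ¬ E ≤ s) (ht : ¬ E ≤ t) :
    ∃ w, w ∈ E ∧ w ∉ s ∧ w ∉ t := by
  obtain ⟨u, huE, hus⟩ := SetLike.not_le_iff_exists.1 hs
  obtain ⟨v, hvE, hvt⟩ := SetLike.not_le_iff_exists.1 ht
  by_cases hut : u ∈ t
  · by_cases hvs : v ∈ s
    · exact ⟨u + v, E.add_mem huE hvE,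
        fun h => hus (by simpa using s.sub_mem h hvs),
        fun h => hvt (by simpa using t.sub_mem h hut)⟩
    · exact ⟨v, hvE, hvs, hvt⟩
  · exact ⟨u, huE, hus, hut⟩

lemma mem_span_sup_left {s : Submodule K V} {w : V} : w ∈ (K ∙ w) ⊔ s :=
  Submodule.mem_sup_left (Submodule.mem_span_singleton_self w)

lemma mem_span_sup_right {s : Submodule K V} {w : V} : w ∈ s ⊔ (K ∙ w) :=
  Submodule.mem_sup_right (Submodule.mem_span_singleton_self w)

lemma span_span_line {w z : V} (hw : w ≠ 0) (hz : z ≠ 0)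
    {s : Submodule K V} (hzs : z ∈ s) (hws : w ∉ s) : PLine ((K ∙ w) ⊔ (K ∙ z)) := by
  apply line_sup_points (point_span hw) (point_span hz)
  intro h
  exact hws (by
    have : w ∈ (K ∙ z) := h ▸ Submodule.mem_span_singleton_self w
    obtain ⟨c, hc⟩ := Submodule.mem_span_singleton.1 this
    exact hc ▸ s.smul_mem c hzs)

lemma plane_mixed (hdim : Module.finrank K V = 4)
    {E g₁ g₂ : Submodule K V} (hE : Module.finrank K E = 3)
    (hg₁ : PLine g₁) (hg₂ : PLine g₂) (h1 : g₁ ≤ E) (h2 : ¬ g₂ ≤ E) :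
    ∃ x : Submodule K V, PLine x ∧ x ≤ E ∧ PMeets g₁ x ∧ PMeets g₂ x := by
  have hmeet : g₂ ⊓ E ≠ ⊥ := inf_ne_bot_of_frk le_top le_top
    (by rw [finrank_top, hdim, hg₂, hE]; omega)
  obtain ⟨w₂, hw20, hw2⟩ := exists_point_le hmeet
  by_cases hq : w₂ ∈ g₁
  · have hlt : ¬ E ≤ g₁ := not_le_of_frk (by rw [hE, hg₁]; omega)
    obtain ⟨w, hwE, hwg⟩ := SetLike.not_le_iff_exists.1 hlt
    have hw0 : w ≠ 0 := fun h => hwg (h ▸ g₁.zero_mem)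
    refine ⟨(K ∙ w₂) ⊔ (K ∙ w), ?_, ?_, ⟨?_, ?_⟩, ?_, ?_⟩
    · apply line_sup_points (point_span hw20) (point_span hw0)
      intro h
      obtain ⟨c, hc⟩ := Submodule.mem_span_singleton.1 (h ▸ Submodule.mem_span_singleton_self w₂)
      exact hwg (by
        rcases eq_or_ne c 0 with h0 | h0
        · exact absurd (by rw [← hc, h0, zero_smul]) hw20
        · have : w = c⁻¹ • w₂ := by rw [← hc, smul_smul, inv_mul_cancel₀ h0, one_smul]
          exact this ▸ g₁.smul_mem c⁻¹ hq)
    · exact sup_le (by rw [Submodule.span_singleton_le_iff_mem]; exact hw2.2)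
        (by rw [Submodule.span_singleton_le_iff_mem]; exact hwE)
    · intro h; exact hwg (h ▸ mem_span_sup_right)
    · exact inf_ne_bot_of_mem hw20 hq mem_span_sup_left
    · intro h
      exact h2 (h ▸ (sup_le (by rw [Submodule.span_singleton_le_iff_mem]; exact hw2.2)
        (by rw [Submodule.span_singleton_le_iff_mem]; exact hwE)))
    · exact inf_ne_bot_of_mem hw20 hw2.1 mem_span_sup_left
  · obtain ⟨u, hu0, hu⟩ := exists_point_le (line_ne_bot hg₁)
    refine ⟨(K ∙ w₂) ⊔ (K ∙ u), span_span_line hw20 hu0 hu hq, ?_, ⟨?_, ?_⟩, ?_, ?_⟩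
    · exact sup_le (by rw [Submodule.span_singleton_le_iff_mem]; exact hw2.2)
        (by rw [Submodule.span_singleton_le_iff_mem]; exact h1 hu)
    · intro h; exact hq (h ▸ mem_span_sup_left)
    · exact inf_ne_bot_of_mem hu0 hu (Submodule.mem_sup_right (Submodule.mem_span_singleton_self u))
    · intro h
      exact h2 (h ▸ (sup_le (by rw [Submodule.span_singleton_le_iff_mem]; exact hw2.2)
        (by rw [Submodule.span_singleton_le_iff_mem]; exact h1 hu)))
    · exact inf_ne_bot_of_mem hw20 hw2.1 mem_span_sup_left

/-- In every plane there is a line meeting two given lines. -/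
lemma plane_transversal (hdim : Module.finrank K V = 4)
    {E g₁ g₂ : Submodule K V} (hE : Module.finrank K E = 3)
    (hg₁ : PLine g₁) (hg₂ : PLine g₂) :
    ∃ x : Submodule K V, PLine x ∧ x ≤ E ∧ PMeets g₁ x ∧ PMeets g₂ x := by
  by_cases h1 : g₁ ≤ E <;> by_cases h2 : g₂ ≤ E
  · have hn1 : ¬ E ≤ g₁ := not_le_of_frk (by rw [hE, hg₁]; omega)
    have hn2 : ¬ E ≤ g₂ := not_le_of_frk (by rw [hE, hg₂]; omega)
    obtain ⟨w, hwE, hw1, hw2⟩ := exists_not_mem_two hn1 hn2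
    have hw0 : w ≠ 0 := fun h => hw1 (h ▸ g₁.zero_mem)
    obtain ⟨z, hz0, hz⟩ := exists_point_le (line_ne_bot hg₁)
    have hxE : (K ∙ w) ⊔ (K ∙ z) ≤ E := sup_le
      (by rw [Submodule.span_singleton_le_iff_mem]; exact hwE)
      (by rw [Submodule.span_singleton_le_iff_mem]; exact h1 hz)
    have hline : PLine ((K ∙ w) ⊔ (K ∙ z)) := by
      apply line_sup_points (point_span hw0) (point_span hz0)
      intro h
      obtain ⟨c, hc⟩ := Submodule.mem_span_singleton.1 (h ▸ Submodule.mem_span_singleton_self w)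
      exact hw1 (hc ▸ g₁.smul_mem c hz)
    refine ⟨(K ∙ w) ⊔ (K ∙ z), hline, hxE, ⟨?_, ?_⟩, ?_, ?_⟩
    · intro h; exact hw1 (h ▸ mem_span_sup_left)
    · exact inf_ne_bot_of_mem hz0 hz mem_span_sup_right
    · intro h; exact hw2 (h ▸ mem_span_sup_left)
    · rw [inf_comm]
      exact inf_ne_bot_of_frk hxE h2 (by rw [hE, hg₂, hline]; omega)
  · exact plane_mixed hdim hE hg₁ hg₂ h1 h2
  · obtain ⟨x, hx, hxE, hm2, hm1⟩ := plane_mixed hdim hE hg₂ hg₁ h2 h1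
    exact ⟨x, hx, hxE, hm1, hm2⟩
  · have hmeet1 : g₁ ⊓ E ≠ ⊥ := inf_ne_bot_of_frk le_top le_top
      (by rw [finrank_top, hdim, hg₁, hE]; omega)
    have hmeet2 : g₂ ⊓ E ≠ ⊥ := inf_ne_bot_of_frk le_top le_top
      (by rw [finrank_top, hdim, hg₂, hE]; omega)
    obtain ⟨w₁, hw10, hw1⟩ := exists_point_le hmeet1
    obtain ⟨w₂, hw20, hw2⟩ := exists_point_le hmeet2
    by_cases hq : (K ∙ w₁) = (K ∙ w₂)
    · have hnE : ¬ E ≤ (K ∙ w₁) := not_le_of_frk (by rw [hE, point_span hw10]; omega)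
      obtain ⟨w, hwE, hww⟩ := SetLike.not_le_iff_exists.1 hnE
      have hw0 : w ≠ 0 := fun h => hww (h ▸ (K ∙ w₁).zero_mem)
      have hline : PLine ((K ∙ w₁) ⊔ (K ∙ w)) := by
        apply line_sup_points (point_span hw10) (point_span hw0)
        intro h
        exact hww (h ▸ Submodule.mem_span_singleton_self w)
      have hxE : (K ∙ w₁) ⊔ (K ∙ w) ≤ E := sup_le
        (by rw [Submodule.span_singleton_le_iff_mem]; exact hw1.2)
        (by rw [Submodule.span_singleton_le_iff_mem]; exact hwE)
      refine ⟨(K ∙ w₁) ⊔ (K ∙ w), hline, hxE, ⟨?_, ?_⟩, ?_, ?_⟩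
      · intro h; exact h1 (h ▸ hxE)
      · exact inf_ne_bot_of_mem hw10 hw1.1 mem_span_sup_left
      · intro h; exact h2 (h ▸ hxE)
      · have : w₂ ∈ (K ∙ w₁) ⊔ (K ∙ w) :=
          Submodule.mem_sup_left (hq ▸ Submodule.mem_span_singleton_self w₂)
        exact inf_ne_bot_of_mem hw20 hw2.1 this
    · have hline : PLine ((K ∙ w₁) ⊔ (K ∙ w₂)) :=
        line_sup_points (point_span hw10) (point_span hw20) hq
      have hxE : (K ∙ w₁) ⊔ (K ∙ w₂) ≤ E := sup_le
        (by rw [Submodule.span_singleton_le_iff_mem]; exact hw1.2)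
        (by rw [Submodule.span_singleton_le_iff_mem]; exact hw2.2)
      refine ⟨(K ∙ w₁) ⊔ (K ∙ w₂), hline, hxE, ⟨?_, ?_⟩, ?_, ?_⟩
      · intro h; exact h1 (h ▸ hxE)
      · exact inf_ne_bot_of_mem hw10 hw1.1 mem_span_sup_left
      · intro h; exact h2 (h ▸ hxE)
      · exact inf_ne_bot_of_mem hw20 hw2.1 mem_span_sup_right

end LemB

section Pencil
open Module Submodule

variable {K V : Type*} [DivisionRing K] [AddCommGroup V] [Module K V]
variable [FiniteDimensional K V]

lemma lines_inf_point {b c P : Submodule K V} (hb : PLine b) (hc : PLine c) (hbc : b ≠ c)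
    (hP : PPoint P) (h1 : P ≤ b) (h2 : P ≤ c) : b ⊓ c = P := by
  have hle : P ≤ b ⊓ c := le_inf h1 h2
  have hne : b ⊓ c ≠ b := fun h => hbc (line_eq_of_le hb hc (h ▸ inf_le_right))
  have hlt : b ⊓ c < b := lt_of_le_of_ne inf_le_left hne
  have hr : Module.finrank K ↑(b ⊓ c) < 2 := hb ▸ Submodule.finrank_lt_finrank_of_lt hlt
  exact (eq_of_le_frk hle (by rw [hP]; omega)).symm

lemma lines_sup_plane {b c P : Submodule K V} (hb : PLine b) (hc : PLine c) (hbc : b ≠ c)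
    (hP : PPoint P) (h1 : P ≤ b) (h2 : P ≤ c) : Module.finrank K ↑(b ⊔ c) = 3 := by
  have h := frk_sup_inf b c
  rw [lines_inf_point hb hc hbc hP h1 h2, hP, hb, hc] at h
  omega

lemma line_inf_point {g F q : Submodule K V} (hg : PLine g) (hq : PPoint q)
    (hqg : q ≤ g) (hqF : q ≤ F) (hgF : ¬ g ≤ F) : F ⊓ g = q := by
  have hne : F ⊓ g ≠ g := fun h => hgF (h ▸ inf_le_left)
  have hlt : F ⊓ g < g := lt_of_le_of_ne inf_le_right hne
  have hr : Module.finrank K ↑(F ⊓ g) < 2 := hg ▸ Submodule.finrank_lt_finrank_of_lt hlt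
  exact (eq_of_le_frk (le_inf hqF hqg) (by rw [hq]; omega)).symm

lemma spans_ne {w z : V} {s : Submodule K V} (hw : w ∈ s) (hz : z ∉ s) :
    (K ∙ w) ≠ (K ∙ z) := by
  intro h
  have hzz : z ∈ (K ∙ w) := by rw [h]; exact Submodule.mem_span_singleton_self z
  exact hz ((Submodule.span_singleton_le_iff_mem w s).2 hw hzz)

lemma point_eq_of_le {P Q : Submodule K V} (hP : PPoint P) (hQ : PPoint Q) (h : P ≤ Q) :
    P = Q := eq_of_le_frk h (by rw [hP, hQ])

/-- Main contradiction: three concurrent coplanar lines do not satisfy the transversal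
property. -/
lemma pencil_contra (hdim : Module.finrank K V = 4)
    (a : Fin 3 → Submodule K V) (ha : ∀ i, PLine (a i))
    (hm : ∀ i : Fin 3, PMeets (a i) (a (i + 1)))
    (hcon : PConcurrent3 (a 0) (a 1) (a 2))
    (htop : a 0 ⊔ a 1 ⊔ a 2 ≠ ⊤)
    (H : ∀ g₁ g₂ : Submodule K V, PLine g₁ → PLine g₂ →
      ∃ x : Fin 3 → Submodule K V, (∀ i, PLine (x i)) ∧
        (∀ i : Fin 3, PMeets g₁ (x i) ∧ PMeets g₂ (x i)) ∧
        (∀ i : Fin 3, PMeetsOrEq (x i) (a i) ∧ PMeetsOrEq (x i) (a (i + 1)) ∧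
          PMeets (a i) (a (i + 1))) ∧
        (∃ i : Fin 3, x i ≠ x (i + 1))) : False := by
  obtain ⟨P, hP, hp0, hp1, hp2⟩ := hcon
  have hPb := point_ne_bot hP
  have e01 : ((0 : Fin 3) + 1) = 1 := rfl
  have e12 : ((1 : Fin 3) + 1) = 2 := rfl
  have e20 : ((2 : Fin 3) + 1) = 0 := rfl
  have hne01 : a 0 ≠ a 1 := by have := (hm 0).1; rwa [e01] at this
  have hne12 : a 1 ≠ a 2 := by have := (hm 1).1; rwa [e12] at this
  have hne20 : a 2 ≠ a 0 := by have := (hm 2).1; rwa [e20] at this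
  set E : Submodule K V := a 0 ⊔ a 1 with hEdef
  have hE : Module.finrank K ↑E = 3 := lines_sup_plane (ha 0) (ha 1) hne01 hP hp0 hp1
  have ha0E : a 0 ≤ E := le_sup_left
  have ha1E : a 1 ≤ E := le_sup_right
  have ha2E : a 2 ≤ E := by
    by_contra h
    apply htop
    apply Submodule.eq_top_of_finrank_eq
    have hlt : E < E ⊔ a 2 := by
      rcases lt_or_eq_of_le (le_sup_left : E ≤ E ⊔ a 2) with h' | h'
      · exact h'
      · exact absurd (h' ▸ (le_sup_right : a 2 ≤ E ⊔ a 2)) h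
    have h4 : 3 < Module.finrank K ↑(E ⊔ a 2) := by
      have := Submodule.finrank_lt_finrank_of_lt hlt
      rwa [hE] at this
    have h5 : Module.finrank K ↑(E ⊔ a 2) ≤ 4 := hdim ▸ Submodule.finrank_le _
    rw [hdim]; omega
  -- the inf of each consecutive pair is P
  have hinf : ∀ i : Fin 3, a i ⊓ a (i + 1) = P := by
    intro i
    fin_cases i
    · show a 0 ⊓ a 1 = P
      exact lines_inf_point (ha 0) (ha 1) hne01 hP hp0 hp1
    · show a 1 ⊓ a 2 = P
      exact lines_inf_point (ha 1) (ha 2) hne12 hP hp1 hp2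
    · show a 2 ⊓ a 0 = P
      exact lines_inf_point (ha 2) (ha 0) hne20 hP hp2 hp0
  have haE : ∀ i : Fin 3, a i ≤ E := by
    intro i; fin_cases i <;> assumption
  -- choose vectors
  obtain ⟨e₁, he10, he1P⟩ := exists_point_le hPb
  have hPe1 : P = K ∙ e₁ :=
    (eq_point_of_le hP ((Submodule.span_singleton_le_iff_mem e₁ P).2 he1P)
      ((Submodule.ne_bot_iff _).2 ⟨e₁, Submodule.mem_span_singleton_self e₁, he10⟩)).symm
  have hPa0 : P < a 0 := lt_of_le_of_ne hp0 (fun h => by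
    have h1 := hP
    have h2 := ha 0
    rw [h] at h1
    simp only [PPoint] at h1
    simp only [PLine] at h2
    omega)
  obtain ⟨e₂, he2a, he2P⟩ := SetLike.exists_of_lt hPa0
  have he20 : e₂ ≠ 0 := fun h => he2P (h ▸ P.zero_mem)
  have ha0E' : a 0 < E := lt_of_le_of_ne ha0E (fun h => by
    have h2 := ha 0
    simp only [PLine] at h2
    rw [h, hE] at h2
    omega)
  obtain ⟨e₃, he3E, he3a⟩ := SetLike.exists_of_lt ha0E'
  have hEtop : E < ⊤ := lt_top_iff_ne_top.2 (fun h => by rw [h, finrank_top, hdim] at hE; omega)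
  obtain ⟨e₄, -, he4E⟩ := SetLike.exists_of_lt hEtop
  have he40 : e₄ ≠ 0 := fun h => he4E (h ▸ E.zero_mem)
  -- derived vectors
  have he120 : e₁ + e₂ ≠ 0 := by
    intro h
    exact he2P (by
      have : e₂ = -e₁ := by linear_combination (norm := module) h
      rw [this]; exact P.neg_mem he1P)
  have he12a0 : e₁ + e₂ ∈ a 0 := a 0 |>.add_mem (hp0 he1P) he2a
  have he34E : e₃ + e₄ ∉ E := fun h => he4E (by simpa using E.sub_mem h he3E)
  have he340 : e₃ + e₄ ≠ 0 := fun h => he34E (h ▸ E.zero_mem)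
  set q₁ : Submodule K V := K ∙ e₂ with hq₁def
  set q₂ : Submodule K V := K ∙ (e₁ + e₂) with hq₂def
  have hq₁ : PPoint q₁ := point_span he20
  have hq₂ : PPoint q₂ := point_span he120
  have hq₁a0 : q₁ ≤ a 0 := (Submodule.span_singleton_le_iff_mem _ _).2 he2a
  have hq₂a0 : q₂ ≤ a 0 := (Submodule.span_singleton_le_iff_mem _ _).2 he12a0
  have he1q₁ : e₁ ∉ q₁ := by
    intro h
    have : P ≤ q₁ := by rw [hPe1, Submodule.span_singleton_le_iff_mem]; exact h
    exact he2P ((point_eq_of_le hP hq₁ this) ▸ Submodule.mem_span_singleton_self e₂)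
  have hq₁q₂ : q₁ ≠ q₂ := by
    intro h
    have h1 : e₁ + e₂ ∈ q₁ := h ▸ Submodule.mem_span_singleton_self (e₁ + e₂)
    exact he1q₁ (by simpa using q₁.sub_mem h1 (Submodule.mem_span_singleton_self e₂))
  set g₁ : Submodule K V := q₁ ⊔ (K ∙ e₄) with hg₁def
  set g₂ : Submodule K V := q₂ ⊔ (K ∙ (e₃ + e₄)) with hg₂def
  have hg₁ : PLine g₁ := line_sup_points hq₁ (point_span he40) (spans_ne (he2a) (fun h => he4E (ha0E h)) )
  have hg₂ : PLine g₂ := line_sup_points hq₂ (point_span he340)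
    (spans_ne he12a0 (fun h => he34E (ha0E h)))
  have hg₁E : ¬ g₁ ≤ E := fun h => he4E (h (Submodule.mem_sup_right (Submodule.mem_span_singleton_self e₄)))
  have hg₂E : ¬ g₂ ≤ E := fun h => he34E (h (Submodule.mem_sup_right (Submodule.mem_span_singleton_self (e₃ + e₄))))
  have hEg₁ : E ⊓ g₁ = q₁ := line_inf_point hg₁ hq₁ le_sup_left (le_trans hq₁a0 ha0E) hg₁E
  have hEg₂ : E ⊓ g₂ = q₂ := line_inf_point hg₂ hq₂ le_sup_left (le_trans hq₂a0 ha0E) hg₂E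
  have hPg₁ : ¬ P ≤ g₁ := by
    intro h
    have : P ≤ q₁ := hEg₁ ▸ le_inf (le_trans hp0 ha0E) h
    exact he2P ((point_eq_of_le hP hq₁ this) ▸ Submodule.mem_span_singleton_self e₂)
  have hPg₂ : ¬ P ≤ g₂ := by
    intro h
    have hle : P ≤ q₂ := hEg₂ ▸ le_inf (le_trans hp0 ha0E) h
    have he12P : e₁ + e₂ ∈ P := (point_eq_of_le hP hq₂ hle) ▸ Submodule.mem_span_singleton_self _
    exact he2P (by simpa using P.sub_mem he12P he1P)
  -- the planes F₁ F₂
  have ha0q₁ : a 0 = P ⊔ q₁ := by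
    apply (eq_of_le_frk (sup_le hp0 hq₁a0) ?_).symm
    rw [ha 0, line_point_vec hP he20 he2P]
  have ha0q₂ : a 0 = P ⊔ q₂ := by
    have he12P : e₁ + e₂ ∉ P := fun h => he2P (by simpa using P.sub_mem h he1P)
    apply (eq_of_le_frk (sup_le hp0 hq₂a0) ?_).symm
    rw [ha 0, line_point_vec hP he120 he12P]
  set F₁ : Submodule K V := a 0 ⊔ (K ∙ e₄) with hF₁def
  set F₂ : Submodule K V := a 0 ⊔ (K ∙ (e₃ + e₄)) with hF₂def
  have hPgF₁ : P ⊔ g₁ = F₁ := by rw [hg₁def, ← sup_assoc, ← ha0q₁]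
  have hPgF₂ : P ⊔ g₂ = F₂ := by rw [hg₂def, ← sup_assoc, ← ha0q₂]
  have hF₁ : Module.finrank K ↑F₁ = 3 := by
    have hd : a 0 ⊓ (K ∙ e₄) = ⊥ := by
      by_contra h
      rw [inf_comm] at h
      exact he4E (ha0E ((point_le_of_inf (point_span he40) h) (Submodule.mem_span_singleton_self e₄)))
    have h := frk_sup_inf (a 0) (K ∙ e₄)
    rw [hd, finrank_bot, add_zero, ha 0, point_span he40] at h
    exact h
  have hF₂r : Module.finrank K ↑F₂ = 3 := by
    have hd : a 0 ⊓ (K ∙ (e₃ + e₄)) = ⊥ := by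
      by_contra h
      rw [inf_comm] at h
      exact he34E (ha0E ((point_le_of_inf (point_span he340) h) (Submodule.mem_span_singleton_self _)))
    have h := frk_sup_inf (a 0) (K ∙ (e₃ + e₄))
    rw [hd, finrank_bot, add_zero, ha 0, point_span he340] at h
    exact h
  have hF₁F₂ : F₁ ≠ F₂ := by
    intro h
    have he34F₁ : e₃ + e₄ ∈ F₁ := h ▸ Submodule.mem_sup_right (Submodule.mem_span_singleton_self _)
    have he4F₁ : e₄ ∈ F₁ := Submodule.mem_sup_right (Submodule.mem_span_singleton_self _)
    have he3F₁ : e₃ ∈ F₁ := by simpa using F₁.sub_mem he34F₁ he4F₁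
    have he30 : e₃ ≠ 0 := fun h0 => he3a (by rw [h0]; exact (a 0).zero_mem)
    have hEF₁ : E ≤ F₁ := by
      have hd : a 0 ⊓ (K ∙ e₃) = ⊥ := by
        by_contra hh
        rw [inf_comm] at hh
        exact he3a ((point_le_of_inf (point_span he30) hh)
          (Submodule.mem_span_singleton_self e₃))
      have hr : Module.finrank K ↑(a 0 ⊔ (K ∙ e₃)) = 3 := by
        have hh := frk_sup_inf (a 0) (K ∙ e₃)
        rw [hd, finrank_bot, add_zero, ha 0,
          point_span he30] at hh
        exact hh
      have hle : a 0 ⊔ (K ∙ e₃) ≤ E := sup_le ha0E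
        ((Submodule.span_singleton_le_iff_mem _ _).2 he3E)
      have : a 0 ⊔ (K ∙ e₃) = E := eq_of_le_frk hle (by rw [hr, hE])
      rw [← this]
      exact sup_le le_sup_left ((Submodule.span_singleton_le_iff_mem _ _).2 he3F₁)
    have : E = F₁ := eq_of_le_frk hEF₁ (by rw [hE, hF₁])
    exact he4E (this ▸ he4F₁)
  have hF₁F₂inf : F₁ ⊓ F₂ = a 0 := by
    have hsup4 : Module.finrank K ↑(F₁ ⊔ F₂) = 4 := by
      have hlt : F₁ < F₁ ⊔ F₂ := by
        rcases lt_or_eq_of_le (le_sup_left : F₁ ≤ F₁ ⊔ F₂) with h' | h'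
        · exact h'
        · exact absurd (eq_of_le_frk (h' ▸ (le_sup_right : F₂ ≤ F₁ ⊔ F₂)) (by rw [hF₁, hF₂r]))
            (Ne.symm hF₁F₂)
      have h4 : 3 < Module.finrank K ↑(F₁ ⊔ F₂) := hF₁ ▸ Submodule.finrank_lt_finrank_of_lt hlt
      have h5 : Module.finrank K ↑(F₁ ⊔ F₂) ≤ 4 := hdim ▸ Submodule.finrank_le _
      omega
    have h := frk_sup_inf F₁ F₂
    rw [hsup4, hF₁, hF₂r] at h
    have hle : a 0 ≤ F₁ ⊓ F₂ := le_inf le_sup_left le_sup_left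
    exact (eq_of_le_frk hle (by rw [ha 0]; omega)).symm
  -- apply the hypothesis
  obtain ⟨x, hxl, hxg, hxa, hxne⟩ := H g₁ g₂ hg₁ hg₂
  have hall : ∀ i : Fin 3, x i = a 0 := by
    intro i
    have hyl : PLine (x i) := hxl i
    have hyg₁ : PMeets g₁ (x i) := (hxg i).1
    have hyg₂ : PMeets g₂ (x i) := (hxg i).2
    have hya : PMeetsOrEq (x i) (a i) := (hxa i).1
    have hya1 : PMeetsOrEq (x i) (a (i + 1)) := (hxa i).2.1
    by_cases hxE : x i ≤ E
    · -- x i contains q₁ and q₂, hence equals a 0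
      have hq₁x : q₁ ≤ x i := by
        have h1 : g₁ ⊓ x i ≤ q₁ := hEg₁ ▸ le_inf (le_trans inf_le_right hxE) inf_le_left
        have h2 : g₁ ⊓ x i = q₁ := eq_point_of_le hq₁ h1 hyg₁.2
        exact h2 ▸ inf_le_right
      have hq₂x : q₂ ≤ x i := by
        have h1 : g₂ ⊓ x i ≤ q₂ := hEg₂ ▸ le_inf (le_trans inf_le_right hxE) inf_le_left
        have h2 : g₂ ⊓ x i = q₂ := eq_point_of_le hq₂ h1 hyg₂.2
        exact h2 ▸ inf_le_right
      have : a 0 ≤ x i := by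
        have hsupq : q₁ ⊔ q₂ = a 0 :=
          eq_of_le_frk (sup_le hq₁a0 hq₂a0) (by rw [ha 0, line_sup_points hq₁ hq₂ hq₁q₂])
        rw [← hsupq]; exact sup_le hq₁x hq₂x
      exact (line_eq_of_le (ha 0) hyl this).symm
    · exfalso
      -- x i passes through P and lies in F₁ ⊓ F₂ = a 0 ≤ E, contradiction
      have hyai : x i ≠ a i := fun h => hxE (h ▸ haE i)
      have hyai1 : x i ≠ a (i + 1) := fun h => hxE (h ▸ haE (i + 1))
      have hminf : x i ⊓ a i ≠ ⊥ := (hya.resolve_right hyai).2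
      have hminf1 : x i ⊓ a (i + 1) ≠ ⊥ := (hya1.resolve_right hyai1).2
      have hxErk : Module.finrank K ↑(x i ⊓ E) < 2 := by
        have hne : x i ⊓ E ≠ x i := fun h => hxE (h ▸ inf_le_right)
        exact hyl ▸ Submodule.finrank_lt_finrank_of_lt (lt_of_le_of_ne inf_le_left hne)
      obtain ⟨w', hw'0, hw'⟩ := exists_point_le hminf
      have hw'x : w' ∈ x i := (Submodule.mem_inf.1 hw').1
      have hw'a : w' ∈ a i := (Submodule.mem_inf.1 hw').2
      obtain ⟨w'', hw''0, hw''⟩ := exists_point_le hminf1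
      have hw''x : w'' ∈ x i := (Submodule.mem_inf.1 hw'').1
      have hw''a : w'' ∈ a (i + 1) := (Submodule.mem_inf.1 hw'').2
      have hxEw : x i ⊓ E = K ∙ w' := by
        apply (eq_of_le_frk ((Submodule.span_singleton_le_iff_mem _ _).2
          (Submodule.mem_inf.2 ⟨hw'x, haE i hw'a⟩)) ?_).symm
        rw [point_span hw'0]; omega
      have hxEw' : x i ⊓ E = K ∙ w'' := by
        apply (eq_of_le_frk ((Submodule.span_singleton_le_iff_mem _ _).2
          (Submodule.mem_inf.2 ⟨hw''x, haE (i + 1) hw''a⟩)) ?_).symm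
        rw [point_span hw''0]; omega
      have hxEP : x i ⊓ E = P := by
        apply eq_point_of_le hP ?_ ?_
        · rw [← hinf i]
          apply le_inf
          · rw [hxEw, Submodule.span_singleton_le_iff_mem]; exact hw'a
          · rw [hxEw', Submodule.span_singleton_le_iff_mem]; exact hw''a
        · rw [hxEw]
          exact (Submodule.ne_bot_iff _).2 ⟨w', Submodule.mem_span_singleton_self w', hw'0⟩
      have hPx : P ≤ x i := hxEP ▸ inf_le_left
      -- transversal vector on g₁
      obtain ⟨w, hw0m, hwm⟩ := exists_point_le hyg₁.2
      have hwg : w ∈ g₁ := (Submodule.mem_inf.1 hwm).1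
      have hwx : w ∈ x i := (Submodule.mem_inf.1 hwm).2
      have hwP : w ∉ P := by
        intro h
        apply hPg₁
        have hPw : P = K ∙ w := (eq_point_of_le hP
          ((Submodule.span_singleton_le_iff_mem _ _).2 h)
          ((Submodule.ne_bot_iff _).2 ⟨w, Submodule.mem_span_singleton_self w, hw0m⟩)).symm
        rw [hPw, Submodule.span_singleton_le_iff_mem]; exact hwg
      have hxi1 : x i = P ⊔ (K ∙ w) := by
        apply (eq_of_le_frk (sup_le hPx ((Submodule.span_singleton_le_iff_mem _ _).2 hwx)) ?_).symm
        rw [hyl, line_point_vec hP hw0m hwP]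
      have hxF₁ : x i ≤ F₁ := by
        rw [hxi1, ← hPgF₁]
        exact sup_le le_sup_left (le_trans ((Submodule.span_singleton_le_iff_mem _ _).2 hwg) le_sup_right)
      -- transversal vector on g₂
      obtain ⟨u, hu0m, hum⟩ := exists_point_le hyg₂.2
      have hug : u ∈ g₂ := (Submodule.mem_inf.1 hum).1
      have hux : u ∈ x i := (Submodule.mem_inf.1 hum).2
      have huP : u ∉ P := by
        intro h
        apply hPg₂
        have hPu : P = K ∙ u := (eq_point_of_le hP
          ((Submodule.span_singleton_le_iff_mem _ _).2 h)
          ((Submodule.ne_bot_iff _).2 ⟨u, Submodule.mem_span_singleton_self u, hu0m⟩)).symm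
        rw [hPu, Submodule.span_singleton_le_iff_mem]; exact hug
      have hxi2 : x i = P ⊔ (K ∙ u) := by
        apply (eq_of_le_frk (sup_le hPx ((Submodule.span_singleton_le_iff_mem _ _).2 hux)) ?_).symm
        rw [hyl, line_point_vec hP hu0m huP]
      have hxF₂ : x i ≤ F₂ := by
        rw [hxi2, ← hPgF₂]
        exact sup_le le_sup_left (le_trans ((Submodule.span_singleton_le_iff_mem _ _).2 hug) le_sup_right)
      exact hxE (le_trans (le_trans (le_inf hxF₁ hxF₂) hF₁F₂inf.le) ha0E)
  obtain ⟨i, hi⟩ := hxne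
  exact hi ((hall i).trans (hall (i + 1)).symm)

end Pencil

theorem statement5 {K V : Type*} [DivisionRing K] [AddCommGroup V] [Module K V]
    (hdim : Module.finrank K V = 4)
    (a : Fin 3 → Submodule K V) (ha : ∀ i, PLine (a i)) :
    (∀ g₁ g₂ : Submodule K V, PLine g₁ → PLine g₂ →
      ∃ x : Fin 3 → Submodule K V, (∀ i, PLine (x i)) ∧
        (∀ i : Fin 3, PMeets g₁ (x i) ∧ PMeets g₂ (x i)) ∧
        (∀ i : Fin 3, PMeetsOrEq (x i) (a i) ∧ PMeetsOrEq (x i) (a (i + 1)) ∧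
          PMeets (a i) (a (i + 1))) ∧
        (∃ i : Fin 3, x i ≠ x (i + 1))) ↔
    TTriple (a 0) (a 1) (a 2) := by
  have hfd : FiniteDimensional K V := FiniteDimensional.of_finrank_pos (by rw [hdim]; omega)
  have e01 : ((0 : Fin 3) + 1) = 1 := rfl
  have e12 : ((1 : Fin 3) + 1) = 2 := rfl
  have e20 : ((2 : Fin 3) + 1) = 0 := rfl
  constructor
  · intro H
    obtain ⟨x, hxl, hxg, hxa, hxne⟩ := H (a 0) (a 0) (ha 0) (ha 0)
    have hm : ∀ i : Fin 3, PMeets (a i) (a (i + 1)) := fun i => (hxa i).2.2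
    have hm01 : PMeets (a 0) (a 1) := by have := hm 0; rwa [e01] at this
    have hm12 : PMeets (a 1) (a 2) := by have := hm 1; rwa [e12] at this
    have hm20 : PMeets (a 2) (a 0) := by have := hm 2; rwa [e20] at this
    by_cases hcon : PConcurrent3 (a 0) (a 1) (a 2)
    · by_cases htop : a 0 ⊔ a 1 ⊔ a 2 = ⊤
      · exact Or.inr ⟨hm01.1, (pmeets_symm hm20).1, hm12.1, hcon, htop⟩
      · exact absurd (pencil_contra hdim a ha hm hcon htop H) id
    · exact Or.inl ⟨hm01.1, (pmeets_symm hm20).1, hm12.1, hm01, pmeets_symm hm20, hm12, hcon⟩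
  · rintro (htri | htri) g₁ g₂ hg₁ hg₂
    · -- triangle case
      obtain ⟨h01, h02, h12, hm01, hm02, hm12, hncon⟩ := htri
      have hpm : ∀ i : Fin 3, PMeets (a i) (a (i + 1)) := by
        intro i; fin_cases i
        · show PMeets (a 0) (a 1); exact hm01
        · show PMeets (a 1) (a 2); exact hm12
        · show PMeets (a 2) (a 0); exact pmeets_symm hm02
      have hwex : ∀ i : Fin 3, ∃ w : V, w ≠ 0 ∧ w ∈ a i ⊓ a (i + 1) :=
        fun i => exists_point_le (hpm i).2
      choose w hw0 hwm using hwex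
      have hPp : ∀ i, PPoint ((K ∙ w i : Submodule K V)) := fun i => point_span (hw0 i)
      have hxex := fun i => point_transversal hdim (hPp i) hg₁ hg₂
      choose x hxl hxP hxg1 hxg2 using hxex
      have hwx : ∀ i, w i ∈ x i := fun i => hxP i (Submodule.mem_span_singleton_self (w i))
      have hwa : ∀ i, w i ∈ a i := fun i => (Submodule.mem_inf.1 (hwm i)).1
      have hwa1 : ∀ i, w i ∈ a (i + 1) := fun i => (Submodule.mem_inf.1 (hwm i)).2
      refine ⟨x, hxl, fun i => ⟨hxg1 i, hxg2 i⟩, ?_, ?_⟩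
      · intro i
        exact ⟨pmoe_of_inf (inf_ne_bot_of_mem (hw0 i) (hwx i) (hwa i)),
          pmoe_of_inf (inf_ne_bot_of_mem (hw0 i) (hwx i) (hwa1 i)), hpm i⟩
      · by_contra hc
        push_neg at hc
        have h0 : x 0 = x 1 := by have := hc 0; rwa [e01] at this
        have h1 : x 1 = x 2 := by have := hc 1; rwa [e12] at this
        have hwa01 : w 0 ∈ a 1 := by have := hwa1 0; rwa [e01] at this
        have hwa12 : w 1 ∈ a 2 := by have := hwa1 1; rwa [e12] at this
        have hwa20 : w 2 ∈ a 0 := by have := hwa1 2; rwa [e20] at this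
        have hP01 : (K ∙ w 0 : Submodule K V) ≠ (K ∙ w 1) := by
          intro h
          apply hncon
          refine ⟨K ∙ w 0, hPp 0, ?_, ?_, ?_⟩
          · exact (Submodule.span_singleton_le_iff_mem _ _).2 (hwa 0)
          · exact (Submodule.span_singleton_le_iff_mem _ _).2 hwa01
          · rw [h]
            exact (Submodule.span_singleton_le_iff_mem _ _).2 hwa12
        have hP12 : (K ∙ w 1 : Submodule K V) ≠ (K ∙ w 2) := by
          intro h
          apply hncon
          refine ⟨K ∙ w 1, hPp 1, ?_, ?_, ?_⟩
          · rw [h]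
            exact (Submodule.span_singleton_le_iff_mem _ _).2 hwa20
          · exact (Submodule.span_singleton_le_iff_mem _ _).2 (hwa 1)
          · exact (Submodule.span_singleton_le_iff_mem _ _).2 hwa12
        have hsup01 : (K ∙ w 0) ⊔ (K ∙ w 1) = a 1 := by
          apply eq_of_le_frk (sup_le ((Submodule.span_singleton_le_iff_mem _ _).2 hwa01)
            ((Submodule.span_singleton_le_iff_mem _ _).2 (hwa 1)))
          rw [ha 1, line_sup_points (hPp 0) (hPp 1) hP01]
        have hsup01x : (K ∙ w 0) ⊔ (K ∙ w 1) = x 0 := by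
          apply eq_of_le_frk (sup_le (hxP 0) (h0 ▸ hxP 1))
          rw [hxl 0, line_sup_points (hPp 0) (hPp 1) hP01]
        have hsup12 : (K ∙ w 1) ⊔ (K ∙ w 2) = a 2 := by
          apply eq_of_le_frk (sup_le ((Submodule.span_singleton_le_iff_mem _ _).2 hwa12)
            ((Submodule.span_singleton_le_iff_mem _ _).2 (hwa 2)))
          rw [ha 2, line_sup_points (hPp 1) (hPp 2) hP12]
        have hsup12x : (K ∙ w 1) ⊔ (K ∙ w 2) = x 0 := by
          apply eq_of_le_frk (sup_le (h0 ▸ hxP 1) ((h0.trans h1) ▸ hxP 2))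
          rw [hxl 0, line_sup_points (hPp 1) (hPp 2) hP12]
        exact h12 ((hsup01 ▸ hsup01x).trans (hsup12 ▸ hsup12x).symm)
    · -- tripod case
      obtain ⟨h01, h02, h12, ⟨p, hp, hp0, hp1, hp2⟩, hsup⟩ := htri
      have hple : ∀ i : Fin 3, p ≤ a i := by
        intro i; fin_cases i <;> assumption
      have hpne : ∀ i : Fin 3, a i ≠ a (i + 1) := by
        intro i; fin_cases i
        · show a 0 ≠ a 1; exact h01
        · show a 1 ≠ a 2; exact h12
        · show a 2 ≠ a 0; exact h02.symm
      have hE : ∀ i : Fin 3, Module.finrank K ↑(a i ⊔ a (i + 1)) = 3 :=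
        fun i => lines_sup_plane (ha i) (ha (i + 1)) (hpne i) hp (hple i) (hple (i + 1))
      have hxex := fun i => plane_transversal hdim (hE i) hg₁ hg₂
      choose x hxl hxle hxg1 hxg2 using hxex
      refine ⟨x, hxl, fun i => ⟨hxg1 i, hxg2 i⟩, ?_, ?_⟩
      · intro i
        refine ⟨pmoe_of_inf ?_, pmoe_of_inf ?_,
          ⟨hpne i, fun h => point_ne_bot hp (le_bot_iff.1 (h ▸ le_inf (hple i) (hple (i + 1))))⟩⟩
        · exact inf_ne_bot_of_frk (hxle i) le_sup_left (by rw [hE i, hxl i, ha i]; omega)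
        · exact inf_ne_bot_of_frk (hxle i) le_sup_right (by rw [hE i, hxl i, ha (i + 1)]; omega)
      · by_contra hc
        push_neg at hc
        have h0 : x 0 = x 1 := by have := hc 0; rwa [e01] at this
        have h1 : x 1 = x 2 := by have := hc 1; rwa [e12] at this
        have hle0 : x 0 ≤ a 0 ⊔ a 1 := by have := hxle 0; rwa [e01] at this
        have hle1 : x 1 ≤ a 1 ⊔ a 2 := by have := hxle 1; rwa [e12] at this
        have hle2 : x 2 ≤ a 2 ⊔ a 0 := by have := hxle 2; rwa [e20] at this
        have hE0 : Module.finrank K ↑(a 0 ⊔ a 1) = 3 := by have := hE 0; rwa [e01] at this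
        have hE1 : Module.finrank K ↑(a 1 ⊔ a 2) = 3 := by have := hE 1; rwa [e12] at this
        have hE2 : Module.finrank K ↑(a 2 ⊔ a 0) = 3 := by have := hE 2; rwa [e20] at this
        have hkey : ∀ E₁ E₂ : Submodule K V, Module.finrank K ↑E₁ = 3 →
            Module.finrank K ↑E₂ = 3 → E₁ ⊔ E₂ = ⊤ →
            ∀ b : Submodule K V, PLine b → b ≤ E₁ → b ≤ E₂ →
            ∀ y : Submodule K V, PLine y → y ≤ E₁ → y ≤ E₂ → y = b := by
          intro E₁ E₂ hE₁ hE₂ htop b hb hb1 hb2 y hy hy1 hy2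
          have hfr := frk_sup_inf E₁ E₂
          rw [htop, finrank_top, hdim, hE₁, hE₂] at hfr
          have hinfb : E₁ ⊓ E₂ = b := by
            apply (eq_of_le_frk (le_inf hb1 hb2) (by rw [hb]; omega)).symm
          exact line_eq_of_le hy hb (hinfb ▸ le_inf hy1 hy2)
        have htop01 : (a 0 ⊔ a 1) ⊔ (a 1 ⊔ a 2) = ⊤ := by
          apply le_antisymm le_top
          rw [← hsup]
          exact sup_le (sup_le (le_sup_left.trans le_sup_left)
            ((le_sup_right.trans le_sup_left : a 1 ≤ (a 0 ⊔ a 1) ⊔ (a 1 ⊔ a 2))))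
            (le_sup_right.trans le_sup_right)
        have htop12 : (a 1 ⊔ a 2) ⊔ (a 2 ⊔ a 0) = ⊤ := by
          apply le_antisymm le_top
          rw [← hsup]
          exact sup_le (sup_le (le_sup_right.trans le_sup_right)
            (le_sup_left.trans le_sup_left)) (le_sup_right.trans le_sup_left)
        have hx0a1 : x 0 = a 1 := hkey _ _ hE0 hE1 htop01 (a 1) (ha 1) le_sup_right le_sup_left
          (x 0) (hxl 0) hle0 (h0 ▸ hle1)
        have hx0a2 : x 0 = a 2 := hkey _ _ hE1 hE2 htop12 (a 2) (ha 2) le_sup_right le_sup_left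
          (x 0) (hxl 0) (h0 ▸ hle1) ((h0.trans h1) ▸ hle2)
        exact h12 (hx0a1 ▸ hx0a2)
end
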